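/- arXiv:2503.14469 — 8 statements merged into one kernel-verified Lean document; each statement's English description precedes it below -/
import Mathlib

section
/- Let Q be a monotone Boolean query and let the finite instance D, partitioned into endogenous tuples D^en and exogenous tuples D^ex, be Q-separable with partition {D_1, …, D_s}, each D_i carrying the inherited partition. Then P_D(Q) = 1 − ∏_{i=1}^{s} (1 − P_{D_i}(Q)). -/
/-!
A minimal satisfying set inside `S ∪ Dᵉˣ` lies in a single block `D_i` of the partition, so by
monotonicity `Q` fails on `S ∪ Dᵉˣ` exactly when it fails on every restriction `(S ∪ Dᵉˣ) ∩ D_i`.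
Since `S ↦ (S ∩ D_i)_i` identifies the subsets of `Dᵉⁿ` with the tuples of subsets of the
blocks `D_i ∩ Dᵉⁿ`, the failure probability on `D` is the product of those on the `D_i`.
-/

open Finset

attribute [local instance] Classical.propDecidable

noncomputable section

variable {α : Type*} [DecidableEq α]

/-- The causal-effect score (= Banzhaf power index):
`CE(D,Q,τ) = 2^{-(|Dᵉⁿ|-1)} · Σ_{S ⊆ Dᵉⁿ∖{τ}} (Q[S ∪ Dᵉˣ ∪ {τ}] − Q[S ∪ Dᵉˣ])`. -/
def ceScore (Q : Finset α → ℕ) (Den Dex : Finset α) (τ : α) : ℝ :=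
  (∑ S ∈ (Den.erase τ).powerset,
      ((Q (S ∪ Dex ∪ {τ}) : ℝ) - (Q (S ∪ Dex) : ℝ))) / 2 ^ (Den.card - 1)

/-- The Shapley value of an endogenous tuple. -/
def shapleyScore (Q : Finset α → ℕ) (Den Dex : Finset α) (τ : α) : ℝ :=
  ∑ S ∈ (Den.erase τ).powerset,
    (((S.card.factorial : ℝ) * ((Den.card - S.card - 1).factorial : ℝ)) /
        (Den.card.factorial : ℝ)) *
      ((Q (S ∪ Dex ∪ {τ}) : ℝ) - (Q (S ∪ Dex) : ℝ))

/-- Responsibility: `1/(1+m)` where `m` is the minimum cardinality of a contingency set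
for `τ`, and `0` if `τ` has no contingency set. -/
def respScore (Q : Finset α → ℕ) (D Den : Finset α) (τ : α) : ℝ :=
  if ∃ Γ ⊆ Den.erase τ, Q (D \ Γ) = 1 ∧ Q (D \ insert τ Γ) = 0 then
    1 / (1 + ((sInf {n : ℕ | ∃ Γ ⊆ Den.erase τ,
        Γ.card = n ∧ Q (D \ Γ) = 1 ∧ Q (D \ insert τ Γ) = 0} : ℕ) : ℝ))
  else 0

/-- Probability of the Boolean query `Q` under the uniform-1/2 tuple-independent
distribution on an instance with endogenous part `Een` and exogenous part `Eex`. -/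
def probQ (Q : Finset α → ℕ) (Een Eex : Finset α) : ℝ :=
  ((Een.powerset.filter (fun S => Q (S ∪ Eex) = 1)).card : ℝ) / 2 ^ Een.card

/-- Two scores are aligned on the endogenous tuples. -/
def scoresAligned (sc1 sc2 : α → ℝ) (Den : Finset α) : Prop :=
  ∀ τ ∈ Den, ∀ τ' ∈ Den, (sc1 τ ≤ sc1 τ' ↔ sc2 τ ≤ sc2 τ')

/-- `W` is a minimal satisfying set for `Q`. -/
def isMSS (Q : Finset α → ℕ) (W : Finset α) : Prop :=
  Q W = 1 ∧ ∀ τ ∈ W, Q (W.erase τ) = 0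

/-- `D` is `Q`-separable with partition `D_1, …, D_s`. -/
def QSeparable (Q : Finset α → ℕ) (D : Finset α) {s : ℕ} (Dp : Fin s → Finset α) : Prop :=
  (∀ i, (Dp i).Nonempty) ∧ (∀ i j, i ≠ j → Disjoint (Dp i) (Dp j)) ∧
  (Finset.univ.biUnion Dp = D) ∧
  (∀ W : Finset α, (W ⊆ D ∧ isMSS Q W) ↔ ∃ i, W ⊆ Dp i ∧ isMSS Q W)

open Function

lemma one_sub_probQ (Q : Finset α → ℕ) (Een Eex : Finset α) :
    1 - probQ Q Een Eex = #{S ∈ Een.powerset | Q (S ∪ Eex) ≠ 1} / 2 ^ #Een := by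
  have hcard := card_filter_add_card_filter_not (s := Een.powerset) (fun S => Q (S ∪ Eex) = 1)
  rw [card_powerset] at hcard
  rw [probQ, eq_div_iff (by positivity), sub_mul, one_mul, div_mul_cancel₀ _ (by positivity),
    sub_eq_iff_eq_add, ← Nat.cast_add, add_comm, hcard, Nat.cast_pow, Nat.cast_ofNat]

section MonotoneBoolean

variable {Q : Finset α → ℕ}

omit [DecidableEq α] in
lemma eq_one_of_subset (hQ01 : ∀ W, Q W ≤ 1) (hmono : Monotone Q) {W W' : Finset α}
    (hW : Q W = 1) (hWW' : W ⊆ W') : Q W' = 1 :=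
  le_antisymm (hQ01 W') (hW ▸ hmono hWW')

lemma exists_isMSS_subset (hQ01 : ∀ W, Q W ≤ 1) {W : Finset α} (hW : Q W = 1) :
    ∃ W' ⊆ W, isMSS Q W' := by
  obtain ⟨W', hW'⟩ := ({W' ∈ W.powerset | Q W' = 1} : Finset _).exists_minimal
    ⟨W, mem_filter.2 ⟨mem_powerset_self W, hW⟩⟩
  obtain ⟨hW'W, hQW'⟩ := mem_filter.1 hW'.prop
  refine ⟨W', mem_powerset.1 hW'W, hQW', fun τ hτ => ?_⟩
  by_contra hne
  have hQerase : Q (W'.erase τ) = 1 := by have := hQ01 (W'.erase τ); omega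
  have hmem : W'.erase τ ∈ ({W' ∈ W.powerset | Q W' = 1} : Finset _) :=
    mem_filter.2 ⟨mem_powerset.2 ((erase_subset τ W').trans (mem_powerset.1 hW'W)), hQerase⟩
  exact (erase_ssubset hτ).not_ge (hW'.le_of_le hmem (erase_subset τ W'))

lemma QSeparable.eq_one_iff {D : Finset α} {s : ℕ} {Dp : Fin s → Finset α}
    (hsep : QSeparable Q D Dp) (hQ01 : ∀ W, Q W ≤ 1) (hmono : Monotone Q)
    {E : Finset α} (hE : E ⊆ D) : Q E = 1 ↔ ∃ i, Q (E ∩ Dp i) = 1 := by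
  constructor
  · intro hQE
    obtain ⟨W, hWE, hW⟩ := exists_isMSS_subset hQ01 hQE
    obtain ⟨i, hWi, -⟩ := (hsep.2.2.2 W).1 ⟨hWE.trans hE, hW⟩
    exact ⟨i, eq_one_of_subset hQ01 hmono hW.1 (subset_inter hWE hWi)⟩
  · rintro ⟨i, hi⟩
    exact eq_one_of_subset hQ01 hmono hi inter_subset_left

end MonotoneBoolean

lemma biUnion_inter_eq_of_subset {ι : Type*} [Fintype ι] {B f : ι → Finset α}
    (hB : Pairwise (Disjoint on B)) (hf : ∀ j, f j ⊆ B j) (i : ι) :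
    univ.biUnion f ∩ B i = f i := by
  ext x
  simp only [mem_inter, mem_biUnion, mem_univ, true_and]
  refine ⟨fun ⟨⟨j, hj⟩, hxi⟩ => ?_, fun hx => ⟨⟨i, hx⟩, hf i hx⟩⟩
  obtain rfl | hji := eq_or_ne j i
  · exact hj
  · exact absurd hxi (disjoint_left.1 (hB hji) (hf j hj))

lemma card_filter_powerset_forall_inter {ι : Type*} [Fintype ι] [DecidableEq ι]
    {A : Finset α} {B : ι → Finset α} (hB : Pairwise (Disjoint on B)) (hA : A ⊆ univ.biUnion B)
    (P : ι → Finset α → Prop) [∀ i, DecidablePred (P i)] :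
    #{S ∈ A.powerset | ∀ i, P i (S ∩ B i)} = ∏ i, #{T ∈ (B i ∩ A).powerset | P i T} := by
  rw [← Fintype.card_piFinset]
  refine card_nbij' (fun S i => S ∩ B i) (fun f => univ.biUnion f) ?_ ?_ ?_ ?_ <;>
    simp only [Set.MapsTo, Set.LeftInvOn, Set.RightInvOn, mem_coe, mem_filter,
      mem_powerset, Fintype.mem_piFinset, subset_inter_iff, and_imp]
  · exact fun S hSA hP i => ⟨⟨inter_subset_right, inter_subset_left.trans hSA⟩, hP i⟩
  · intro f hf
    refine ⟨biUnion_subset.2 fun i _ => (hf i).1.2, fun i => ?_⟩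
    rw [biUnion_inter_eq_of_subset hB fun j => (hf j).1.1]
    exact (hf i).2
  · intro S hSA _
    rw [← inter_biUnion, inter_eq_left]
    exact hSA.trans hA
  · exact fun f hf => funext (biUnion_inter_eq_of_subset hB fun j => (hf j).1.1)

theorem stmt1_general (Q : Finset α → ℕ) (hQ01 : ∀ W, Q W ≤ 1)
    (hmono : ∀ ⦃W W' : Finset α⦄, W ⊆ W' → Q W ≤ Q W')
    (D Den Dex : Finset α) (hpart : Den ∪ Dex = D)
    {s : ℕ} (Dp : Fin s → Finset α)
    (hsep : QSeparable Q D Dp) :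
    probQ Q Den Dex = 1 - ∏ i : Fin s, (1 - probQ Q (Dp i ∩ Den) (Dp i ∩ Dex)) := by
  have hdisj : Pairwise (Disjoint on Dp) := hsep.2.1
  have hDen : Den ⊆ univ.biUnion Dp := hsep.2.2.1 ▸ hpart ▸ subset_union_left
  have hcount : #{S ∈ Den.powerset | Q (S ∪ Dex) ≠ 1} =
      ∏ i, #{T ∈ (Dp i ∩ Den).powerset | Q (T ∪ Dp i ∩ Dex) ≠ 1} := by
    rw [← card_filter_powerset_forall_inter hdisj hDen]
    congr 1
    ext S
    simp only [mem_filter, mem_powerset, and_congr_right_iff]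
    intro hS
    have hSD : S ∪ Dex ⊆ D := hpart ▸ union_subset_union hS subset_rfl
    simp only [ne_eq, hsep.eq_one_iff hQ01 hmono hSD, union_inter_distrib_right,
      inter_comm Dex, not_exists]
  have hpow : (2 : ℝ) ^ #Den = ∏ i, 2 ^ #(Dp i ∩ Den) := by
    have := card_filter_powerset_forall_inter hdisj hDen (fun _ _ => True)
    simp only [implies_true, filter_true, card_powerset] at this
    exact_mod_cast this
  rw [eq_sub_iff_add_eq, ← eq_sub_iff_add_eq', one_sub_probQ, hcount, hpow, Nat.cast_prod,
    ← prod_div_distrib]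
  simp only [one_sub_probQ]

/-- For a monotone Boolean query `Q` and a `Q`-separable instance `D = Dᵉⁿ ∪ Dᵉˣ` with
partition `D_1,…,D_s` (each with the inherited endogenous/exogenous partition):
`P_D(Q) = 1 − ∏_i (1 − P_{D_i}(Q))`. -/
theorem stmt1 (Q : Finset α → ℕ) (hQ01 : ∀ W, Q W ≤ 1)
    (hmono : ∀ ⦃W W' : Finset α⦄, W ⊆ W' → Q W ≤ Q W')
    (D Den Dex : Finset α) (hpart : Den ∪ Dex = D) (hdisj : Disjoint Den Dex)
    {s : ℕ} (Dp : Fin s → Finset α)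
    (hsep : QSeparable Q D Dp) :
    probQ Q Den Dex = 1 - ∏ i : Fin s, (1 - probQ Q (Dp i ∩ Den) (Dp i ∩ Dex)) :=
  stmt1_general Q hQ01 hmono D Den Dex hpart Dp hsep

end
end

section
/- Let Q be a monotone Boolean query and let the finite instance D, partitioned into D^en and D^ex, be Q-separable with partition {D_1, …, D_s}, each subset of D carrying the inherited partition. Let τ ∈ D_k ∩ D^en for some k. Assume there exists Γ ⊆ (D∖D_k) ∩ D^en with Q[(D∖D_k)∖Γ] = 0, and let r(D∖D_k) be the minimum cardinality of such a Γ. Then ρ(D,Q,τ) = ρ(D_k,Q,τ) / (1 + ρ(D_k,Q,τ) · r(D∖D_k)). -/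
open Finset

attribute [local instance] Classical.propDecidable

noncomputable section

variable {α : Type*} [DecidableEq α]

/-- Every satisfying set contains a minimal satisfying subset. -/
lemma exists_mss_aux (Q : Finset α → ℕ) (hQ01 : ∀ W, Q W ≤ 1) :
    ∀ W : Finset α, Q W = 1 → ∃ V ⊆ W, isMSS Q V := by
  intro W
  induction W using Finset.strongInduction with
  | _ W ih =>
    intro hW
    by_cases h : ∀ τ ∈ W, Q (W.erase τ) = 0
    · exact ⟨W, Finset.Subset.refl W, hW, h⟩
    · push_neg at h
      obtain ⟨τ, hτ, hne⟩ := h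
      have h1 : Q (W.erase τ) = 1 :=
        le_antisymm (hQ01 _) (Nat.one_le_iff_ne_zero.mpr hne)
      obtain ⟨V, hVsub, hV⟩ := ih (W.erase τ) (Finset.erase_ssubset hτ) h1
      exact ⟨V, hVsub.trans (Finset.erase_subset _ _), hV⟩

/-- For a monotone `Q`, a `Q`-separable instance `D` with partition `D_1,…,D_s`
(inherited endogenous/exogenous partitions) and `τ ∈ D_k ∩ Dᵉⁿ`: if some
`Γ ⊆ (D∖D_k) ∩ Dᵉⁿ` satisfies `Q[(D∖D_k)∖Γ] = 0` and `r(D∖D_k)` is the minimum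
cardinality of such a `Γ`, then
`ρ(D,Q,τ) = ρ(D_k,Q,τ) / (1 + ρ(D_k,Q,τ) · r(D∖D_k))`. -/
theorem stmt2 (Q : Finset α → ℕ) (hQ01 : ∀ W, Q W ≤ 1)
    (hmono : ∀ ⦃W W' : Finset α⦄, W ⊆ W' → Q W ≤ Q W')
    (D Den Dex : Finset α) (hpart : Den ∪ Dex = D) (hdisj : Disjoint Den Dex)
    {s : ℕ} (Dp : Fin s → Finset α)
    (hsep : QSeparable Q D Dp) (k : Fin s) (τ : α)
    (hτk : τ ∈ Dp k) (hτen : τ ∈ Den)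
    (hex : ∃ Γ ⊆ (D \ Dp k) ∩ Den, Q ((D \ Dp k) \ Γ) = 0) :
    respScore Q D Den τ =
      respScore Q (Dp k) (Dp k ∩ Den) τ /
        (1 + respScore Q (Dp k) (Dp k ∩ Den) τ *
          ((sInf {n : ℕ | ∃ Γ ⊆ (D \ Dp k) ∩ Den,
              Γ.card = n ∧ Q ((D \ Dp k) \ Γ) = 0} : ℕ) : ℝ)) := by
  obtain ⟨hne, hdisjp, hbiU, hMSS⟩ := hsep
  have hDkD : Dp k ⊆ D := by
    rw [← hbiU]; exact Finset.subset_biUnion_of_mem Dp (Finset.mem_univ k)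
  have hDenD : Den ⊆ D := by rw [← hpart]; exact Finset.subset_union_left
  -- decomposition: a satisfying subset of D has a satisfying intersection with some part
  have hdec : ∀ W : Finset α, W ⊆ D → Q W = 1 → ∃ i, Q (W ∩ Dp i) = 1 := by
    intro W hWD hW
    obtain ⟨V, hVW, hV⟩ := exists_mss_aux Q hQ01 W hW
    obtain ⟨i, hVi, hV'⟩ := (hMSS V).mp ⟨hVW.trans hWD, hV⟩
    refine ⟨i, le_antisymm (hQ01 _) ?_⟩
    have h := hmono (Finset.subset_inter hVW hVi)
    have h2 : Q V = 1 := hV.1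
    omega
  -- splitting a contingency set of D
  have hsplit : ∀ Γ : Finset α, Γ ⊆ Den.erase τ → Q (D \ Γ) = 1 →
      Q (D \ insert τ Γ) = 0 →
      (Γ ∩ Dp k ⊆ (Dp k ∩ Den).erase τ ∧ Q (Dp k \ (Γ ∩ Dp k)) = 1 ∧
        Q (Dp k \ insert τ (Γ ∩ Dp k)) = 0) ∧
      ((Γ \ Dp k) ⊆ (D \ Dp k) ∩ Den ∧ Q ((D \ Dp k) \ (Γ \ Dp k)) = 0) ∧
      Γ.card = (Γ ∩ Dp k).card + (Γ \ Dp k).card := by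
    intro Γ hΓ h1 h0
    have hΓDen : ∀ x ∈ Γ, x ∈ Den ∧ x ≠ τ := by
      intro x hx
      have := hΓ hx
      rw [Finset.mem_erase] at this
      exact ⟨this.2, this.1⟩
    have hk1 : Q (Dp k \ (Γ ∩ Dp k)) = 1 := by
      obtain ⟨i, hi⟩ := hdec (D \ Γ) Finset.sdiff_subset h1
      by_cases hik : i = k
      · subst hik
        refine le_antisymm (hQ01 _) ?_
        have hsub : (D \ Γ) ∩ Dp i ⊆ Dp i \ (Γ ∩ Dp i) := by
          intro x hx
          simp only [Finset.mem_inter, Finset.mem_sdiff] at hx ⊢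
          tauto
        have := hmono hsub
        omega
      · exfalso
        have hsub : (D \ Γ) ∩ Dp i ⊆ D \ insert τ Γ := by
          intro x hx
          simp only [Finset.mem_inter, Finset.mem_sdiff, Finset.mem_insert] at hx ⊢
          refine ⟨hx.1.1, ?_⟩
          rintro (rfl | hxΓ)
          · exact (hdisjp i k hik).forall_ne_finset hx.2 hτk rfl
          · exact hx.1.2 hxΓ
        have := hmono hsub
        omega
    have hk0 : Q (Dp k \ insert τ (Γ ∩ Dp k)) = 0 := by
      have hsub : Dp k \ insert τ (Γ ∩ Dp k) ⊆ D \ insert τ Γ := by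
        intro x hx
        simp only [Finset.mem_sdiff, Finset.mem_insert, Finset.mem_inter] at hx ⊢
        refine ⟨hDkD hx.1, ?_⟩
        rintro (rfl | hxΓ)
        · exact hx.2 (Or.inl rfl)
        · exact hx.2 (Or.inr ⟨hxΓ, hx.1⟩)
      have := hmono hsub
      omega
    have hr0 : Q ((D \ Dp k) \ (Γ \ Dp k)) = 0 := by
      have hsub : (D \ Dp k) \ (Γ \ Dp k) ⊆ D \ insert τ Γ := by
        intro x hx
        simp only [Finset.mem_sdiff, Finset.mem_insert] at hx ⊢
        refine ⟨hx.1.1, ?_⟩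
        rintro (rfl | hxΓ)
        · exact hx.1.2 hτk
        · exact hx.2 ⟨hxΓ, hx.1.2⟩
      have := hmono hsub
      omega
    refine ⟨⟨?_, hk1, hk0⟩, ⟨?_, hr0⟩, ?_⟩
    · intro x hx
      rw [Finset.mem_inter] at hx
      obtain ⟨hxDen, hxτ⟩ := hΓDen x hx.1
      simp only [Finset.mem_erase, Finset.mem_inter]
      exact ⟨hxτ, hx.2, hxDen⟩
    · intro x hx
      rw [Finset.mem_sdiff] at hx
      obtain ⟨hxDen, _⟩ := hΓDen x hx.1
      simp only [Finset.mem_inter, Finset.mem_sdiff]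
      exact ⟨⟨hDenD hxDen, hx.2⟩, hxDen⟩
    · rw [Finset.card_inter_add_card_sdiff]
  -- joining contingency sets
  have hjoin : ∀ Γk Γ' : Finset α, Γk ⊆ (Dp k ∩ Den).erase τ →
      Q (Dp k \ Γk) = 1 → Q (Dp k \ insert τ Γk) = 0 →
      Γ' ⊆ (D \ Dp k) ∩ Den → Q ((D \ Dp k) \ Γ') = 0 →
      (Γk ∪ Γ' ⊆ Den.erase τ ∧ Q (D \ (Γk ∪ Γ')) = 1 ∧
        Q (D \ insert τ (Γk ∪ Γ')) = 0 ∧ (Γk ∪ Γ').card = Γk.card + Γ'.card) := by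
    intro Γk Γ' hΓk h1 h0 hΓ' hr0
    have hΓkk : ∀ x ∈ Γk, x ∈ Dp k ∧ x ∈ Den ∧ x ≠ τ := by
      intro x hx
      have := hΓk hx
      simp only [Finset.mem_erase, Finset.mem_inter] at this
      exact ⟨this.2.1, this.2.2, this.1⟩
    have hΓ'r : ∀ x ∈ Γ', x ∈ D ∧ x ∉ Dp k ∧ x ∈ Den := by
      intro x hx
      have := hΓ' hx
      simp only [Finset.mem_inter, Finset.mem_sdiff] at this
      exact ⟨this.1.1, this.1.2, this.2⟩
    have hdisjΓ : Disjoint Γk Γ' := by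
      rw [Finset.disjoint_left]
      intro x hx hx'
      exact (hΓ'r x hx').2.1 (hΓkk x hx).1
    refine ⟨?_, ?_, ?_, Finset.card_union_of_disjoint hdisjΓ⟩
    · intro x hx
      rw [Finset.mem_union] at hx
      rw [Finset.mem_erase]
      rcases hx with hx | hx
      · exact ⟨(hΓkk x hx).2.2, (hΓkk x hx).2.1⟩
      · refine ⟨?_, (hΓ'r x hx).2.2⟩
        rintro rfl
        exact (hΓ'r x hx).2.1 hτk
    · refine le_antisymm (hQ01 _) ?_
      have hsub : Dp k \ Γk ⊆ D \ (Γk ∪ Γ') := by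
        intro x hx
        rw [Finset.mem_sdiff] at hx ⊢
        refine ⟨hDkD hx.1, ?_⟩
        rw [Finset.mem_union]
        rintro (h | h)
        · exact hx.2 h
        · exact (hΓ'r x h).2.1 hx.1
      have := hmono hsub
      omega
    · by_contra hne
      have hQ1 : Q (D \ insert τ (Γk ∪ Γ')) = 1 := by
        have := hQ01 (D \ insert τ (Γk ∪ Γ')); omega
      obtain ⟨i, hi⟩ := hdec _ Finset.sdiff_subset hQ1
      by_cases hik : i = k
      · subst hik
        have hsub : (D \ insert τ (Γk ∪ Γ')) ∩ Dp i ⊆ Dp i \ insert τ Γk := by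
          intro x hx
          simp only [Finset.mem_inter, Finset.mem_sdiff, Finset.mem_insert,
            Finset.mem_union] at hx ⊢
          exact ⟨hx.2, fun h => hx.1.2 (by tauto)⟩
        have := hmono hsub
        omega
      · have hsub : (D \ insert τ (Γk ∪ Γ')) ∩ Dp i ⊆ (D \ Dp k) \ Γ' := by
          intro x hx
          simp only [Finset.mem_inter, Finset.mem_sdiff, Finset.mem_insert,
            Finset.mem_union] at hx ⊢
          refine ⟨⟨hx.1.1, fun h => (hdisjp i k hik).forall_ne_finset hx.2 h rfl⟩, ?_⟩
          intro h
          exact hx.1.2 (Or.inr (Or.inr h))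
        have := hmono hsub
        omega
  by_cases hB : ∃ Γ ⊆ (Dp k ∩ Den).erase τ, Q (Dp k \ Γ) = 1 ∧ Q (Dp k \ insert τ Γ) = 0
  · -- contingency sets exist everywhere
    obtain ⟨Γ'0, hΓ'0, hQΓ'0⟩ := hex
    obtain ⟨Γk0, hΓk0, h1k0, h0k0⟩ := id hB
    have hA : ∃ Γ ⊆ Den.erase τ, Q (D \ Γ) = 1 ∧ Q (D \ insert τ Γ) = 0 := by
      obtain ⟨hsub, h1, h0, _⟩ := hjoin Γk0 Γ'0 hΓk0 h1k0 h0k0 hΓ'0 hQΓ'0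
      exact ⟨Γk0 ∪ Γ'0, hsub, h1, h0⟩
    have hBne : {n : ℕ | ∃ Γ ⊆ (Dp k ∩ Den).erase τ,
        Γ.card = n ∧ Q (Dp k \ Γ) = 1 ∧ Q (Dp k \ insert τ Γ) = 0}.Nonempty :=
      ⟨Γk0.card, Γk0, hΓk0, rfl, h1k0, h0k0⟩
    have hCne : {n : ℕ | ∃ Γ ⊆ (D \ Dp k) ∩ Den,
        Γ.card = n ∧ Q ((D \ Dp k) \ Γ) = 0}.Nonempty :=
      ⟨Γ'0.card, Γ'0, hΓ'0, rfl, hQΓ'0⟩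
    have hAne : {n : ℕ | ∃ Γ ⊆ Den.erase τ,
        Γ.card = n ∧ Q (D \ Γ) = 1 ∧ Q (D \ insert τ Γ) = 0}.Nonempty := by
      obtain ⟨Γ, hsub, h1, h0⟩ := hA
      exact ⟨Γ.card, Γ, hsub, rfl, h1, h0⟩
    have hkey : sInf {n : ℕ | ∃ Γ ⊆ Den.erase τ,
        Γ.card = n ∧ Q (D \ Γ) = 1 ∧ Q (D \ insert τ Γ) = 0}
      = sInf {n : ℕ | ∃ Γ ⊆ (Dp k ∩ Den).erase τ,
        Γ.card = n ∧ Q (Dp k \ Γ) = 1 ∧ Q (Dp k \ insert τ Γ) = 0}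
      + sInf {n : ℕ | ∃ Γ ⊆ (D \ Dp k) ∩ Den,
        Γ.card = n ∧ Q ((D \ Dp k) \ Γ) = 0} := by
      apply le_antisymm
      · obtain ⟨ΓB, hΓB, hcB, h1B, h0B⟩ := Nat.sInf_mem hBne
        obtain ⟨ΓC, hΓC, hcC, h0C⟩ := Nat.sInf_mem hCne
        obtain ⟨hsub, h1, h0, hcard⟩ := hjoin ΓB ΓC hΓB h1B h0B hΓC h0C
        have : (ΓB ∪ ΓC).card ∈ {n : ℕ | ∃ Γ ⊆ Den.erase τ,
            Γ.card = n ∧ Q (D \ Γ) = 1 ∧ Q (D \ insert τ Γ) = 0} :=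
          ⟨ΓB ∪ ΓC, hsub, rfl, h1, h0⟩
        have := Nat.sInf_le this
        omega
      · obtain ⟨ΓA, hΓA, hcA, h1A, h0A⟩ := Nat.sInf_mem hAne
        obtain ⟨⟨hsubk, h1k, h0k⟩, ⟨hsubr, h0r⟩, hcard⟩ := hsplit ΓA hΓA h1A h0A
        have hk : (ΓA ∩ Dp k).card ∈ {n : ℕ | ∃ Γ ⊆ (Dp k ∩ Den).erase τ,
            Γ.card = n ∧ Q (Dp k \ Γ) = 1 ∧ Q (Dp k \ insert τ Γ) = 0} :=
          ⟨ΓA ∩ Dp k, hsubk, rfl, h1k, h0k⟩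
        have hr : (ΓA \ Dp k).card ∈ {n : ℕ | ∃ Γ ⊆ (D \ Dp k) ∩ Den,
            Γ.card = n ∧ Q ((D \ Dp k) \ Γ) = 0} :=
          ⟨ΓA \ Dp k, hsubr, rfl, h0r⟩
        have h1 := Nat.sInf_le hk
        have h2 := Nat.sInf_le hr
        omega
    rw [respScore, respScore, if_pos hA, if_pos hB, hkey]
    set mB := sInf {n : ℕ | ∃ Γ ⊆ (Dp k ∩ Den).erase τ,
        Γ.card = n ∧ Q (Dp k \ Γ) = 1 ∧ Q (Dp k \ insert τ Γ) = 0} with hmB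
    set rr := sInf {n : ℕ | ∃ Γ ⊆ (D \ Dp k) ∩ Den,
        Γ.card = n ∧ Q ((D \ Dp k) \ Γ) = 0} with hrr
    have hb : (0:ℝ) < 1 + (mB : ℝ) := by positivity
    have hbr : (0:ℝ) < 1 + (mB : ℝ) + (rr : ℝ) := by positivity
    push_cast
    have h1 : (1:ℝ) + (mB:ℝ) ≠ 0 := hb.ne'
    have h2 : (1:ℝ) + 1/(1+(mB:ℝ))*(rr:ℝ) ≠ 0 := by positivity
    field_simp
    ring
  · -- no contingency set in Dp k, hence none in D
    have hA : ¬ ∃ Γ ⊆ Den.erase τ, Q (D \ Γ) = 1 ∧ Q (D \ insert τ Γ) = 0 := by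
      rintro ⟨Γ, hΓ, h1, h0⟩
      obtain ⟨⟨hsubk, h1k, h0k⟩, _, _⟩ := hsplit Γ hΓ h1 h0
      exact hB ⟨Γ ∩ Dp k, hsubk, h1k, h0k⟩
    rw [respScore, respScore, if_neg hA, if_neg hB]
    simp

end
end

section
/- Fix a countably infinite type C of constants, and let tuples be either R-tuples (pairs (a,b) ∈ C × C) or S-tuples (elements a ∈ C). Let Q_2 be the Boolean query with Q_2[W] = 1 iff there exist a, b with R(a,b) ∈ W and S(a) ∈ W (the Boolean conjunctive query ∃x∃y (R(x,y) ∧ S(x))). Then there exists a finite instance D with D^ex ≠ ∅ such that CE and ρ are not aligned for (Q_2, D). Concretely, for D with R-tuples {(a,a),(a,b),(b,a)} and S-tuples {a, b} (a ≠ b), all endogenous except the S-tuple a, which is exogenous: CE(D,Q_2,R(a,a)) = 3/8 > 1/8 = CE(D,Q_2,R(b,a)) while ρ(D,Q_2,R(a,a)) ≤ ρ(D,Q_2,R(b,a)), so the scores are not aligned. -/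
open Finset

attribute [local instance] Classical.propDecidable

noncomputable section

variable {α : Type*} [DecidableEq α]

variable (C : Type) [DecidableEq C]

/-- The Boolean conjunctive query `∃x∃y (R(x,y) ∧ S(x))`: R-tuples are pairs (left),
S-tuples are constants (right). -/
def Q2 : Finset ((C × C) ⊕ C) → ℕ :=
  fun W => if ∃ a b : C, Sum.inl (a, b) ∈ W ∧ Sum.inr a ∈ W then 1 else 0

/-- The instance `D₂` : R-tuples `{(a,a),(a,b),(b,a)}` and S-tuples `{a,b}`. -/
def D6 (a b : C) : Finset ((C × C) ⊕ C) :=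
  {Sum.inl (a, a), Sum.inl (a, b), Sum.inl (b, a), Sum.inr a, Sum.inr b}

/-- The exogenous part: the S-tuple `a`. -/
def Dex6 (a : C) : Finset ((C × C) ⊕ C) := {Sum.inr a}

/-- The endogenous part. -/
def Den6 (a b : C) : Finset ((C × C) ⊕ C) := D6 C a b \ Dex6 C a

end

/-! With `S(a)` exogenous, `R(a,a)` alone satisfies `Q₂`, so it is counterfactual for every set of
other endogenous tuples that does not satisfy `Q₂` by itself: three of the eight subsets of
`{R(a,b), R(b,a), S(b)}`. `R(b,a)` is counterfactual only together with `S(b)` and without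
`R(a,a)`, `R(a,b)`: one subset of eight. Responsibility only sees minimum contingency sets, and
both tuples need two others removed (`R(a,b)` and one of `R(b,a)`, `S(b)`, resp. `R(a,a)` and
`R(a,b)`), so `ρ(R(a,a)) ≤ 1/3 ≤ ρ(R(b,a))` although the causal effects are strictly ordered the
other way. -/

theorem Finset.sum_powerset_triple {β M : Type*} [DecidableEq β] [AddCommMonoid M] {x y z : β}
    (hxy : x ≠ y) (hxz : x ≠ z) (hyz : y ≠ z) (g : Finset β → M) :
    ∑ t ∈ ({x, y, z} : Finset β).powerset, g t =
      g ∅ + g {z} + g {y} + g {y, z} + g {x} + g {x, z} + g {x, y} + g {x, y, z} := by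
  have sum_powerset_singleton (f : Finset β → M) :
      ∑ t ∈ ({z} : Finset β).powerset, f t = f ∅ + f {z} := by
    rw [← insert_empty, sum_powerset_insert (notMem_empty z)]
    simp
  simp only [sum_powerset_insert (show x ∉ ({y, z} : Finset β) by simp [hxy, hxz]),
    sum_powerset_insert (show y ∉ ({z} : Finset β) by simpa), sum_powerset_singleton,
    insert_empty]
  abel

theorem not_scoresAligned_of_lt_of_le {α : Type*} {sc1 sc2 : α → ℝ} {Den : Finset α} {τ τ' : α}
    (hτ : τ ∈ Den) (hτ' : τ' ∈ Den) (h1 : sc1 τ' < sc1 τ) (h2 : sc2 τ ≤ sc2 τ') :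
    ¬ scoresAligned sc1 sc2 Den :=
  fun h => h1.not_ge ((h τ hτ τ' hτ').mpr h2)

section Responsibility

variable {α : Type*} [DecidableEq α] {Q : Finset α → ℕ} {D Den : Finset α} {τ : α}

theorem one_div_le_respScore {Γ : Finset α} (hΓ : Γ ⊆ Den.erase τ) (h1 : Q (D \ Γ) = 1)
    (h0 : Q (D \ insert τ Γ) = 0) : 1 / (1 + (Γ.card : ℝ)) ≤ respScore Q D Den τ := by
  rw [respScore, if_pos ⟨Γ, hΓ, h1, h0⟩]
  gcongr
  exact Nat.sInf_le ⟨Γ, hΓ, rfl, h1, h0⟩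

theorem respScore_le_one_div {m : ℕ}
    (h : ∀ Γ ⊆ Den.erase τ, Q (D \ Γ) = 1 → Q (D \ insert τ Γ) = 0 → m ≤ Γ.card) :
    respScore Q D Den τ ≤ 1 / (1 + (m : ℝ)) := by
  rw [respScore]
  split_ifs with hex
  · obtain ⟨Γ, hΓ, h1, h0⟩ := hex
    gcongr
    refine le_csInf ⟨Γ.card, Γ, hΓ, rfl, h1, h0⟩ ?_
    rintro n ⟨Γ, hΓ, rfl, h1, h0⟩
    exact_mod_cast h Γ hΓ h1 h0
  · positivity

end Responsibility

theorem Q2_eq_zero_iff {C : Type} {W : Finset ((C × C) ⊕ C)} :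
    Q2 C W = 0 ↔ ∀ x y, Sum.inl (x, y) ∈ W → Sum.inr x ∉ W := by
  simp [Q2]

section InstanceD6

variable {C : Type} [DecidableEq C] {a b : C}

theorem Den6_eq (hab : a ≠ b) :
    Den6 C a b = {Sum.inl (a, a), Sum.inl (a, b), Sum.inl (b, a), Sum.inr b} := by
  ext x
  grind [Den6, D6, Dex6]

theorem ceScore_Q2_inl_aa (hab : a ≠ b) :
    ceScore (Q2 C) (Den6 C a b) (Dex6 C a) (Sum.inl (a, a)) = 3 / 8 := by
  calc _ = (1 + 1 + 1 : ℝ) / 2 ^ 3 := by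
        rw [ceScore, Den6_eq hab, erase_insert (by simp [hab]),
          sum_powerset_triple (by simp [hab]) (by simp) (by simp)]
        simp [Q2, Dex6, hab, hab.symm, or_and_right, and_or_left, exists_or]
    _ = 3 / 8 := by norm_num

theorem ceScore_Q2_inl_ba (hab : a ≠ b) :
    ceScore (Q2 C) (Den6 C a b) (Dex6 C a) (Sum.inl (b, a)) = 1 / 8 := by
  have herase : (Den6 C a b).erase (Sum.inl (b, a)) =
      {Sum.inl (a, a), Sum.inl (a, b), Sum.inr b} := by
    rw [Den6_eq hab]
    ext
    grind
  calc _ = (1 : ℝ) / 2 ^ 3 := by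
        rw [ceScore, herase, sum_powerset_triple (by simp [hab]) (by simp) (by simp), Den6_eq hab]
        simp [Q2, Dex6, hab, hab.symm, or_and_right, and_or_left, exists_or]
    _ = 1 / 8 := by norm_num

theorem two_le_card_of_Q2_sdiff_insert_inl_aa (hab : a ≠ b) {Γ : Finset ((C × C) ⊕ C)}
    (hΓ : Γ ⊆ (Den6 C a b).erase (Sum.inl (a, a)))
    (h0 : Q2 C (D6 C a b \ insert (Sum.inl (a, a)) Γ) = 0) : 2 ≤ Γ.card := by
  rw [Q2_eq_zero_iff] at h0
  rw [Den6_eq hab, erase_insert (by simp [hab])] at hΓ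
  have hSa : Sum.inr a ∉ Γ := fun h => by simpa [hab] using hΓ h
  have hRab : Sum.inl (a, b) ∈ Γ := by
    by_contra h
    exact h0 a b (by simp [D6, h, hab.symm]) (by simp [D6, hSa])
  obtain ⟨c, hc, hne⟩ : ∃ c ∈ Γ, c ≠ Sum.inl (a, b) := by
    by_contra! h
    have hRba : Sum.inl (b, a) ∉ Γ := fun h' => by simpa [hab] using h _ h'
    have hSb : Sum.inr b ∉ Γ := fun h' => by simpa using h _ h'
    exact h0 b a (by simp [D6, hRba, hab.symm]) (by simp [D6, hSb])
  exact one_lt_card.mpr ⟨_, hRab, c, hc, hne.symm⟩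

theorem respScore_Q2_inl_aa_le (hab : a ≠ b) :
    respScore (Q2 C) (D6 C a b) (Den6 C a b) (Sum.inl (a, a)) ≤ 1 / 3 :=
  (respScore_le_one_div fun _ hΓ _ h0 => two_le_card_of_Q2_sdiff_insert_inl_aa hab hΓ h0).trans_eq
    (by norm_num)

theorem le_respScore_Q2_inl_ba (hab : a ≠ b) :
    1 / 3 ≤ respScore (Q2 C) (D6 C a b) (Den6 C a b) (Sum.inl (b, a)) := by
  set Γ : Finset ((C × C) ⊕ C) := {Sum.inl (a, a), Sum.inl (a, b)}
  have hΓ : Γ ⊆ (Den6 C a b).erase (Sum.inl (b, a)) := by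
    simp [Γ, Den6_eq hab, insert_subset_iff, hab, hab.symm]
  have h1 : Q2 C (D6 C a b \ Γ) = 1 :=
    if_pos ⟨b, a, by simp [Γ, D6, hab, hab.symm], by simp [Γ, D6]⟩
  have h0 : Q2 C (D6 C a b \ insert (Sum.inl (b, a)) Γ) = 0 :=
    Q2_eq_zero_iff.mpr fun x y h => by grind [D6]
  calc (1 : ℝ) / 3 = 1 / (1 + (Γ.card : ℝ)) := by rw [card_pair (by simp [hab])]; norm_num
    _ ≤ _ := one_div_le_respScore hΓ h1 h0

end InstanceD6

variable (C : Type) [DecidableEq C]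

theorem stmt6 (a b : C) (hab : a ≠ b) :
    Dex6 C a ≠ ∅ ∧
    ceScore (Q2 C) (Den6 C a b) (Dex6 C a) (Sum.inl (a, a)) = 3 / 8 ∧
    ceScore (Q2 C) (Den6 C a b) (Dex6 C a) (Sum.inl (b, a)) = 1 / 8 ∧
    (3 : ℝ) / 8 > 1 / 8 ∧
    respScore (Q2 C) (D6 C a b) (Den6 C a b) (Sum.inl (a, a)) ≤
      respScore (Q2 C) (D6 C a b) (Den6 C a b) (Sum.inl (b, a)) ∧
    ¬ scoresAligned (ceScore (Q2 C) (Den6 C a b) (Dex6 C a))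
        (respScore (Q2 C) (D6 C a b) (Den6 C a b)) (Den6 C a b) := by
  have hce_aa := ceScore_Q2_inl_aa hab
  have hce_ba := ceScore_Q2_inl_ba hab
  have hresp := (respScore_Q2_inl_aa_le hab).trans (le_respScore_Q2_inl_ba hab)
  refine ⟨by simp [Dex6], hce_aa, hce_ba, by norm_num, hresp, ?_⟩
  refine not_scoresAligned_of_lt_of_le (by simp [Den6_eq hab]) (by simp [Den6_eq hab]) ?_ hresp
  rw [hce_aa, hce_ba]
  norm_num
end

section
/- Fix n ≥ 2 and a countably infinite type C of constants, and let tuples be pairs (i,c) ∈ {1,…,n} × C. Let Q_n be the Boolean query with Q_n[W] = 1 iff for every i ∈ {1,…,n} there exists c ∈ C with (i,c) ∈ W (the multi-component Boolean conjunctive query ∃x_1 … ∃x_n (R_1(x_1) ∧ … ∧ R_n(x_n)), one unary atom per component). Then for every finite instance D of such tuples and every partition of D into endogenous tuples D^en and exogenous tuples D^ex, the scores CE and ρ are aligned for (Q_n, D). -/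
/-!
If `Den ∪ Dex` fails `Q_n`, or the component of `τ` contains an exogenous tuple, then `τ` has
neither a swing set nor a contingency set, and both scores vanish. Otherwise, if that component
holds `k` endogenous tuples, every contingency set for `τ` contains the other `k - 1` of them,
and these alone form one, so `ρ = 1/k`. A subset `S ⊆ Den` with `Q_n[S ∪ Dex] = 1` splits into a swing set of `τ` (its part
outside the component) and a nonempty subset of the component, so `τ` has `M / (2^k - 1)` swing
sets, where `M` does not depend on `τ`. Both scores are therefore strictly decreasing functions of
the same rank `k - 1 ∈ ℕ∞` (`⊤` for the tuples scoring `0`).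
-/

open Finset

attribute [local instance] Classical.propDecidable

noncomputable section

variable {α : Type*} [DecidableEq α]

/-- The multi-component Boolean conjunctive query
`∃x_1…∃x_n (R_1(x_1) ∧ … ∧ R_n(x_n))`, one unary atom per component. -/
def Qn (n : ℕ) (C : Type) [DecidableEq C] : Finset (Fin n × C) → ℕ :=
  fun W => if ∀ i : Fin n, ∃ c : C, (i, c) ∈ W then 1 else 0

theorem card_filter_powerset_union {ι : Type*} [DecidableEq ι] {A B : Finset ι}
    (hAB : Disjoint A B) (p q : Finset ι → Prop) [DecidablePred p] [DecidablePred q] :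
    #{S ∈ (A ∪ B).powerset | p (S ∩ A) ∧ q (S ∩ B)} =
      #{S ∈ A.powerset | p S} * #{S ∈ B.powerset | q S} := by
  have split {X Y : Finset ι} (hX : X ⊆ A) (hY : Y ⊆ B) :
      (X ∪ Y) ∩ A = X ∧ (X ∪ Y) ∩ B = Y := by
    rw [union_inter_distrib_right, union_inter_distrib_right, inter_eq_left.2 hX,
      inter_eq_left.2 hY, disjoint_iff_inter_eq_empty.1 (hAB.symm.mono_left hY),
      disjoint_iff_inter_eq_empty.1 (hAB.mono_left hX), union_empty, empty_union]
    exact ⟨rfl, rfl⟩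
  rw [← card_product]
  refine card_bij' (fun S _ => (S ∩ A, S ∩ B)) (fun X _ => X.1 ∪ X.2) ?_ ?_ ?_ ?_
  · intro S hS
    simp only [mem_filter, mem_powerset, mem_product] at hS ⊢
    exact ⟨⟨inter_subset_right, hS.2.1⟩, inter_subset_right, hS.2.2⟩
  · rintro ⟨X, Y⟩ hXY
    simp only [mem_filter, mem_powerset, mem_product] at hXY ⊢
    obtain ⟨⟨hX, hpX⟩, hY, hqY⟩ := hXY
    rw [(split hX hY).1, (split hX hY).2]
    exact ⟨union_subset_union hX hY, hpX, hqY⟩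
  · intro S hS
    simp only [mem_filter, mem_powerset] at hS
    rw [← inter_union_distrib_left, inter_eq_left.2 hS.1]
  · rintro ⟨X, Y⟩ hXY
    simp only [mem_filter, mem_powerset, mem_product] at hXY
    exact Prod.ext (split hXY.1.1 hXY.2.1).1 (split hXY.1.1 hXY.2.1).2

theorem card_filter_nonempty_powerset {ι : Type*} (s : Finset ι) :
    #{S ∈ s.powerset | S.Nonempty} = 2 ^ #s - 1 := by
  simp_rw [nonempty_iff_ne_empty]
  rw [filter_ne', card_erase_of_mem (empty_mem_powerset s), card_powerset]

theorem ENat.strictAnti_recTopCoe {β : Type*} [Preorder β] {d : β} {g : ℕ → β}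
    (hg : StrictAnti g) (hd : ∀ m, d < g m) : StrictAnti (ENat.recTopCoe d g : ℕ∞ → β) := by
  intro a b hab
  lift a to ℕ using hab.ne_top
  induction b using ENat.recTopCoe with
  | top => simpa using hd a
  | coe b => simpa using hg (by exact_mod_cast hab)

theorem scoresAligned_of_strictAnti {ι β : Type*} [LinearOrder β] {sc1 sc2 : ι → ℝ}
    {Den : Finset ι} (key : ι → β) {φ1 φ2 : β → ℝ} (hφ1 : StrictAnti φ1) (hφ2 : StrictAnti φ2)
    (h1 : ∀ τ ∈ Den, sc1 τ = φ1 (key τ)) (h2 : ∀ τ ∈ Den, sc2 τ = φ2 (key τ)) :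
    scoresAligned sc1 sc2 Den := by
  intro τ hτ τ' hτ'
  rw [h1 τ hτ, h1 τ' hτ', h2 τ hτ, h2 τ' hτ', hφ1.le_iff_ge, hφ2.le_iff_ge]

def swingSets (Q : Finset α → ℕ) (Den Dex : Finset α) (τ : α) : Finset (Finset α) :=
  {S ∈ (Den.erase τ).powerset | Q (S ∪ Dex ∪ {τ}) = 1 ∧ Q (S ∪ Dex) = 0}

theorem ceScore_eq_card_swingSets {Q : Finset α → ℕ} (hQ : ∀ W, Q W ≤ 1) (hmono : Monotone Q)
    (Den Dex : Finset α) (τ : α) :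
    ceScore Q Den Dex τ = #(swingSets Q Den Dex τ) / 2 ^ (#Den - 1) := by
  rw [ceScore, swingSets, card_filter, Nat.cast_sum]
  congr 1
  refine sum_congr rfl fun S _ => ?_
  have hle := hQ (S ∪ Dex ∪ {τ})
  have hge := hmono (subset_union_left : S ∪ Dex ⊆ S ∪ Dex ∪ {τ})
  generalize Q (S ∪ Dex ∪ {τ}) = a, Q (S ∪ Dex) = b at *
  interval_cases a <;> interval_cases b <;> simp

theorem respScore_eq_of_isLeast (Q : Finset α → ℕ) (D Den : Finset α) (τ : α) {m : ℕ}
    (h : IsLeast {k : ℕ | ∃ Γ ⊆ Den.erase τ,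
      Γ.card = k ∧ Q (D \ Γ) = 1 ∧ Q (D \ insert τ Γ) = 0} m) :
    respScore Q D Den τ = 1 / (1 + m) := by
  obtain ⟨Γ, hΓ, -, h1, h0⟩ := h.1
  rw [respScore, if_pos ⟨Γ, hΓ, h1, h0⟩, h.csInf_eq]

section Coverage

variable {n : ℕ} {C : Type}

def Covers (W : Finset (Fin n × C)) : Prop :=
  ∀ i : Fin n, ∃ c : C, (i, c) ∈ W

theorem Covers.mono {W W' : Finset (Fin n × C)} (hW : Covers W) (h : W ⊆ W') : Covers W' :=
  fun i => (hW i).imp fun _ hc => h hc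

variable [DecidableEq C]

theorem covers_iff_of_covers_insert {X : Finset (Fin n × C)} {τ : Fin n × C}
    (h : Covers (insert τ X)) : Covers X ↔ ∃ t ∈ X, t.1 = τ.1 := by
  refine ⟨fun hX => ?_, fun ⟨t, ht, htτ⟩ i => ?_⟩
  · obtain ⟨c, hc⟩ := hX τ.1
    exact ⟨_, hc, rfl⟩
  · obtain ⟨c, hc⟩ := h i
    rcases mem_insert.1 hc with hτ | hc
    · exact ⟨t.2, by rwa [show (i, t.2) = t from Prod.ext (by rw [htτ, ← hτ]) rfl]⟩
    · exact ⟨c, hc⟩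

theorem Qn_apply (W : Finset (Fin n × C)) : Qn n C W = if Covers W then 1 else 0 := by
  unfold Qn Covers; congr

theorem Qn_eq_one_iff {W : Finset (Fin n × C)} : Qn n C W = 1 ↔ Covers W := by
  rw [Qn_apply]; split_ifs with h <;> simp [h]

theorem Qn_le_one (W : Finset (Fin n × C)) : Qn n C W ≤ 1 := by
  rw [Qn_apply]; split_ifs <;> simp

theorem Qn_monotone : Monotone (Qn n C) := by
  intro W W' h
  rw [Qn_apply, Qn_apply]
  split_ifs with hW hW' <;> first | exact absurd (hW.mono h) hW' | simp

theorem Qn_insert_eq_one_and_eq_zero_iff {X : Finset (Fin n × C)} {τ : Fin n × C} :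
    Qn n C (insert τ X) = 1 ∧ Qn n C X = 0 ↔ Covers (insert τ X) ∧ ∀ t ∈ X, t.1 ≠ τ.1 := by
  rw [Qn_eq_one_iff]
  refine and_congr_right fun h => ?_
  simp only [Qn_apply, ite_eq_right_iff, one_ne_zero, imp_false, covers_iff_of_covers_insert h,
    not_exists, not_and, ne_eq]

end Coverage

section Swing

variable {n : ℕ} {C : Type} [DecidableEq C] {Den Dex : Finset (Fin n × C)} {τ : Fin n × C}

def siblings (Den : Finset (Fin n × C)) (τ : Fin n × C) : Finset (Fin n × C) :=
  {t ∈ Den | t.1 = τ.1}.erase τ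

theorem mem_siblings {t : Fin n × C} : t ∈ siblings Den τ ↔ t ≠ τ ∧ t ∈ Den ∧ t.1 = τ.1 := by
  simp [siblings]

def coveringSets (Den Dex : Finset (Fin n × C)) : Finset (Finset (Fin n × C)) :=
  {S ∈ Den.powerset | Covers (S ∪ Dex)}

theorem mem_swingSets_Qn {S : Finset (Fin n × C)} :
    S ∈ swingSets (Qn n C) Den Dex τ ↔
      S ⊆ Den.erase τ ∧ Covers (insert τ (S ∪ Dex)) ∧ ∀ t ∈ S ∪ Dex, t.1 ≠ τ.1 := by
  simp only [swingSets, mem_filter, mem_powerset, union_singleton,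
    Qn_insert_eq_one_and_eq_zero_iff]

theorem swingSets_Qn_eq_empty_of_not_covers (hτ : τ ∈ Den) (hD : ¬ Covers (Den ∪ Dex)) :
    swingSets (Qn n C) Den Dex τ = ∅ := by
  refine eq_empty_of_forall_notMem fun S hS => hD ?_
  obtain ⟨hS, hcov, -⟩ := mem_swingSets_Qn.1 hS
  refine hcov.mono (insert_subset (mem_union_left _ hτ) (union_subset_union ?_ subset_rfl))
  exact hS.trans (erase_subset _ _)

theorem swingSets_Qn_eq_empty_of_blocked {e : Fin n × C} (he : e ∈ Dex) (heτ : e.1 = τ.1) :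
    swingSets (Qn n C) Den Dex τ = ∅ :=
  eq_empty_of_forall_notMem fun _ hS => (mem_swingSets_Qn.1 hS).2.2 e (mem_union_right _ he) heτ

theorem covers_union_iff {S : Finset (Fin n × C)} (hS : S ⊆ Den) (hfree : ∀ t ∈ Dex, t.1 ≠ τ.1) :
    Covers (S ∪ Dex) ↔ Covers (insert τ (S ∩ {t ∈ Den | ¬ t.1 = τ.1} ∪ Dex)) ∧
      (S ∩ {t ∈ Den | t.1 = τ.1}).Nonempty := by
  refine ⟨fun h => ⟨fun i => ?_, ?_⟩, fun ⟨h, f, hf⟩ => ?_⟩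
  · by_cases hi : i = τ.1
    · exact ⟨τ.2, by simp [hi]⟩
    obtain ⟨c, hc⟩ := h i
    refine ⟨c, mem_insert_of_mem ?_⟩
    rcases mem_union.1 hc with hcS | hcD
    · exact mem_union_left _ (mem_inter.2 ⟨hcS, mem_filter.2 ⟨hS hcS, hi⟩⟩)
    · exact mem_union_right _ hcD
  · obtain ⟨c, hc⟩ := h τ.1
    rcases mem_union.1 hc with hcS | hcD
    · exact ⟨_, mem_inter.2 ⟨hcS, mem_filter.2 ⟨hS hcS, rfl⟩⟩⟩
    · exact absurd rfl (hfree (τ.1, c) hcD)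
  · obtain ⟨hfS, hfF⟩ := mem_inter.1 hf
    refine (covers_iff_of_covers_insert (h.mono ?_)).2
      ⟨f, mem_union_left _ hfS, (mem_filter.1 hfF).2⟩
    exact insert_subset_insert _ (union_subset_union inter_subset_left subset_rfl)

theorem swingSets_Qn_eq_filter (hfree : ∀ t ∈ Dex, t.1 ≠ τ.1) :
    swingSets (Qn n C) Den Dex τ =
      {S ∈ {t ∈ Den | ¬ t.1 = τ.1}.powerset | Covers (insert τ (S ∪ Dex))} := by
  ext S
  simp only [mem_swingSets_Qn, mem_filter, mem_powerset, subset_iff, mem_erase, mem_union]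
  constructor
  · rintro ⟨hS, hcov, hS1⟩
    exact ⟨fun t ht => ⟨(hS ht).2, hS1 t (Or.inl ht)⟩, hcov⟩
  · rintro ⟨hS, hcov⟩
    refine ⟨fun t ht => ⟨fun htτ => (hS ht).2 (htτ ▸ rfl), (hS ht).1⟩, hcov, ?_⟩
    rintro t (ht | ht)
    exacts [(hS ht).2, hfree t ht]

/-- A covering set splits into its part outside the component of `τ`, a swing set of `τ`, and
a nonempty set of tuples of that component. -/
theorem card_coveringSets (hτ : τ ∈ Den) (hfree : ∀ t ∈ Dex, t.1 ≠ τ.1) :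
    #(coveringSets Den Dex) =
      #(swingSets (Qn n C) Den Dex τ) * (2 ^ (#(siblings Den τ) + 1) - 1) := by
  set F := {t ∈ Den | t.1 = τ.1}
  set A := {t ∈ Den | ¬ t.1 = τ.1}
  have hcov : coveringSets Den Dex =
      {S ∈ (A ∪ F).powerset | Covers (insert τ (S ∩ A ∪ Dex)) ∧ (S ∩ F).Nonempty} := by
    rw [union_comm, filter_union_filter_not_eq, coveringSets]
    exact filter_congr fun S hS => covers_union_iff (mem_powerset.1 hS) hfree
  rw [hcov, card_filter_powerset_union (p := fun X => Covers (insert τ (X ∪ Dex)))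
    (q := Finset.Nonempty) (A := A) (B := F) (disjoint_filter.2 fun _ _ h h' => h h'),
    swingSets_Qn_eq_filter hfree, siblings, card_erase_add_one (s := F) (mem_filter.2 ⟨hτ, rfl⟩),
    card_filter_nonempty_powerset]

end Swing

section Contingency

variable {n : ℕ} {C : Type} [DecidableEq C] {Den Dex Γ : Finset (Fin n × C)} {τ : Fin n × C}

theorem respScore_Qn_of_not_covers {D : Finset (Fin n × C)} (hD : ¬ Covers D) :
    respScore (Qn n C) D Den τ = 0 := by
  rw [respScore, if_neg]
  rintro ⟨Γ, -, h, -⟩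
  exact hD ((Qn_eq_one_iff.1 h).mono sdiff_subset)

theorem isContingency_Qn_iff (hτ : τ ∈ Den) (hΓ : Γ ⊆ Den.erase τ) :
    Qn n C ((Den ∪ Dex) \ Γ) = 1 ∧ Qn n C ((Den ∪ Dex) \ insert τ Γ) = 0 ↔
      Covers ((Den ∪ Dex) \ Γ) ∧ ∀ t ∈ (Den ∪ Dex) \ insert τ Γ, t.1 ≠ τ.1 := by
  have hτΓ : τ ∈ (Den ∪ Dex) \ Γ :=
    mem_sdiff.2 ⟨mem_union_left _ hτ, fun h => (mem_erase.1 (hΓ h)).1 rfl⟩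
  have := Qn_insert_eq_one_and_eq_zero_iff (X := ((Den ∪ Dex) \ Γ).erase τ) (τ := τ)
  rwa [insert_erase hτΓ, ← sdiff_insert] at this

theorem respScore_Qn_of_blocked (hdisj : Disjoint Den Dex) (hτ : τ ∈ Den) {e : Fin n × C}
    (he : e ∈ Dex) (heτ : e.1 = τ.1) : respScore (Qn n C) (Den ∪ Dex) Den τ = 0 := by
  rw [respScore, if_neg]
  rintro ⟨Γ, hΓ, h⟩
  refine ((isContingency_Qn_iff hτ hΓ).1 h).2 e
    (mem_sdiff.2 ⟨mem_union_right _ he, fun heΓ => ?_⟩) heτ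
  have : insert τ Γ ⊆ Den := insert_subset hτ (hΓ.trans (erase_subset _ _))
  exact disjoint_left.1 hdisj (this heΓ) he

theorem isLeast_card_contingency_Qn (hD : Covers (Den ∪ Dex)) (hτ : τ ∈ Den)
    (hfree : ∀ t ∈ Dex, t.1 ≠ τ.1) :
    IsLeast {k : ℕ | ∃ Γ ⊆ Den.erase τ, #Γ = k ∧ Qn n C ((Den ∪ Dex) \ Γ) = 1 ∧
      Qn n C ((Den ∪ Dex) \ insert τ Γ) = 0} #(siblings Den τ) := by
  have hsib : siblings Den τ ⊆ Den.erase τ := fun t ht => by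
    obtain ⟨htτ, htD, -⟩ := mem_siblings.1 ht
    exact mem_erase.2 ⟨htτ, htD⟩
  refine ⟨⟨_, hsib, rfl, (isContingency_Qn_iff hτ hsib).2 ⟨fun i => ?_, fun t ht htτ => ?_⟩⟩, ?_⟩
  · obtain ⟨c, hc⟩ := hD i
    by_cases hs : (i, c) ∈ siblings Den τ
    · have hτi : (i, τ.2) = τ := Prod.ext (mem_siblings.1 hs).2.2 rfl
      refine ⟨τ.2, mem_sdiff.2 ⟨?_, ?_⟩⟩ <;> rw [hτi]
      exacts [mem_union_left _ hτ, fun h => (mem_siblings.1 h).1 rfl]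
    · exact ⟨c, mem_sdiff.2 ⟨hc, hs⟩⟩
  · obtain ⟨htD, htτΓ⟩ := mem_sdiff.1 ht
    rcases mem_union.1 htD with htDen | htDex
    · refine htτΓ (mem_insert_of_mem (mem_siblings.2 ⟨fun h => ?_, htDen, htτ⟩))
      exact htτΓ (h ▸ mem_insert_self _ _)
    · exact hfree t htDex htτ
  · rintro _ ⟨Γ, hΓ, rfl, h⟩
    refine card_le_card fun s hs => ?_
    obtain ⟨hsτ, hsD, hs1⟩ := mem_siblings.1 hs
    by_contra hsΓ
    refine ((isContingency_Qn_iff hτ hΓ).1 h).2 s (mem_sdiff.2 ⟨mem_union_left _ hsD, ?_⟩) hs1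
    rw [mem_insert, not_or]
    exact ⟨hsτ, hsΓ⟩

end Contingency

def respOfRank : ℕ∞ → ℝ :=
  ENat.recTopCoe 0 fun m => 1 / (1 + m)

def ceOfRank (c : ℝ) : ℕ∞ → ℝ :=
  ENat.recTopCoe 0 fun m => c / (2 ^ (m + 1) - 1)

theorem two_pow_succ_sub_one_pos (m : ℕ) : (0 : ℝ) < 2 ^ (m + 1) - 1 :=
  sub_pos.2 (one_lt_pow₀ one_lt_two m.succ_ne_zero)

theorem strictAnti_respOfRank : StrictAnti respOfRank := by
  refine ENat.strictAnti_recTopCoe (strictAnti_nat_of_succ_lt fun m => ?_) fun m => by positivity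
  gcongr
  simp

theorem strictAnti_ceOfRank {c : ℝ} (hc : 0 < c) : StrictAnti (ceOfRank c) := by
  refine ENat.strictAnti_recTopCoe (strictAnti_nat_of_succ_lt fun m => ?_)
    fun m => div_pos hc (two_pow_succ_sub_one_pos m)
  gcongr
  all_goals first | exact two_pow_succ_sub_one_pos m | norm_num

section Rank

variable {n : ℕ} {C : Type} [DecidableEq C] {Den Dex : Finset (Fin n × C)} {τ : Fin n × C}

/-- When `Covers (Den ∪ Dex)`, this is the minimum size of a contingency set for `τ`, and `⊤`
exactly when there is none. -/
def contingencyRank (Den Dex : Finset (Fin n × C)) (τ : Fin n × C) : ℕ∞ :=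
  if ∀ t ∈ Dex, t.1 ≠ τ.1 then #(siblings Den τ) else ⊤

theorem respScore_Qn_eq (hdisj : Disjoint Den Dex) (hD : Covers (Den ∪ Dex)) (hτ : τ ∈ Den) :
    respScore (Qn n C) (Den ∪ Dex) Den τ = respOfRank (contingencyRank Den Dex τ) := by
  rw [contingencyRank]
  split_ifs with hfree
  · rw [respScore_eq_of_isLeast _ _ _ _ (isLeast_card_contingency_Qn hD hτ hfree)]
    simp [respOfRank]
  · push Not at hfree
    obtain ⟨e, he, heτ⟩ := hfree
    rw [respScore_Qn_of_blocked hdisj hτ he heτ]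
    simp [respOfRank]

theorem ceScore_Qn_eq (hτ : τ ∈ Den) :
    ceScore (Qn n C) Den Dex τ =
      ceOfRank (#(coveringSets Den Dex) / 2 ^ (#Den - 1)) (contingencyRank Den Dex τ) := by
  rw [ceScore_eq_card_swingSets Qn_le_one Qn_monotone, contingencyRank]
  split_ifs with hfree
  · have hpos := two_pow_succ_sub_one_pos #(siblings Den τ)
    rw [card_coveringSets hτ hfree, ceOfRank, ENat.recTopCoe_natCast]
    push_cast [Nat.one_le_two_pow]
    field_simp
  · push Not at hfree
    obtain ⟨e, he, heτ⟩ := hfree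
    simp [swingSets_Qn_eq_empty_of_blocked he heτ, ceOfRank]

theorem ceScore_Qn_of_not_covers (hD : ¬ Covers (Den ∪ Dex)) (hτ : τ ∈ Den) :
    ceScore (Qn n C) Den Dex τ = 0 := by
  simp [ceScore_eq_card_swingSets Qn_le_one Qn_monotone,
    swingSets_Qn_eq_empty_of_not_covers hτ hD]

end Rank

theorem stmt8_general (n : ℕ) (C : Type) [DecidableEq C]
    (D Den Dex : Finset (Fin n × C)) (hpart : Den ∪ Dex = D) (hdisj : Disjoint Den Dex) :
    scoresAligned (ceScore (Qn n C) Den Dex) (respScore (Qn n C) D Den) Den := by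
  subst hpart
  by_cases hD : Covers (Den ∪ Dex)
  · have hc : (0 : ℝ) < #(coveringSets Den Dex) / 2 ^ (#Den - 1) := by
      have hDen : Den ∈ coveringSets Den Dex := mem_filter.2 ⟨mem_powerset_self Den, hD⟩
      have := card_pos.2 ⟨Den, hDen⟩
      positivity
    exact scoresAligned_of_strictAnti (contingencyRank Den Dex) (strictAnti_ceOfRank hc)
      strictAnti_respOfRank (fun τ hτ => ceScore_Qn_eq hτ) (fun τ hτ => respScore_Qn_eq hdisj hD hτ)
  · intro τ hτ τ' hτ'
    simp only [ceScore_Qn_of_not_covers hD hτ, ceScore_Qn_of_not_covers hD hτ',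
      respScore_Qn_of_not_covers hD, le_refl]

/-- For `Q_n : ∃x_1…∃x_n (R_1(x_1) ∧ … ∧ R_n(x_n))` (`n ≥ 2`), the causal-effect score
and responsibility are aligned for every instance, with or without exogenous tuples. -/
theorem stmt8 (n : ℕ) (hn : 2 ≤ n) (C : Type) [DecidableEq C] [Countable C] [Infinite C]
    (D Den Dex : Finset (Fin n × C)) (hpart : Den ∪ Dex = D) (hdisj : Disjoint Den Dex) :
    scoresAligned (ceScore (Qn n C) Den Dex) (respScore (Qn n C) D Den) Den :=
  stmt8_general n C D Den Dex hpart hdisj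
end
end

section
/- Fix a countably infinite type C of constants, and let tuples be R-tuples, S-tuples, or T-tuples, each an element of C. Let Q be the Boolean query with Q[W] = 1 iff (there exists x with R(x) ∈ W) and (there exists y with S(y) ∈ W and T(y) ∈ W) (the two-component Boolean conjunctive query ∃x∃y (R(x) ∧ S(y) ∧ T(y)), whose second component has two atoms). Then there exists a finite instance D of such tuples, with D^ex ≠ ∅, such that CE and ρ are not aligned for (Q, D). -/
open Finset

attribute [local instance] Classical.propDecidable

noncomputable section

variable {α : Type*} [DecidableEq α]

/-- The two-component Boolean conjunctive query `∃x∃y (R(x) ∧ S(y) ∧ T(y))`: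
R-tuples `Sum.inl`, S-tuples `Sum.inr ∘ Sum.inl`, T-tuples `Sum.inr ∘ Sum.inr`. -/
def Q9 (C : Type) [DecidableEq C] : Finset (C ⊕ (C ⊕ C)) → ℕ :=
  fun W => if (∃ x : C, Sum.inl x ∈ W) ∧
      (∃ y : C, Sum.inr (Sum.inl y) ∈ W ∧ Sum.inr (Sum.inr y) ∈ W) then 1 else 0

lemma Q9_eq_one {C : Type} [DecidableEq C] {W : Finset (C ⊕ (C ⊕ C))}
    (x y : C) (hx : Sum.inl x ∈ W) (h1 : Sum.inr (Sum.inl y) ∈ W)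
    (h2 : Sum.inr (Sum.inr y) ∈ W) : Q9 C W = 1 :=
  if_pos ⟨⟨x, hx⟩, ⟨y, h1, h2⟩⟩

lemma Q9_eq_zero {C : Type} [DecidableEq C] {W : Finset (C ⊕ (C ⊕ C))}
    (h : ∀ y : C, Sum.inr (Sum.inl y) ∈ W → Sum.inr (Sum.inr y) ∉ W) : Q9 C W = 0 :=
  if_neg (by rintro ⟨-, y, h1, h2⟩; exact h y h1 h2)

lemma sum_powerset_pair {β : Type*} [DecidableEq β] (f : Finset β → ℝ) (x y : β) (hxy : x ≠ y) :
    ∑ S ∈ ({x, y} : Finset β).powerset, f S = f ∅ + f {y} + (f {x} + f {x, y}) := by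
  rw [show ({x, y} : Finset β) = insert x {y} from rfl,
    Finset.sum_powerset_insert (by simp [hxy]),
    show ({y} : Finset β) = insert y ∅ from rfl,
    Finset.sum_powerset_insert (Finset.notMem_empty y),
    Finset.sum_powerset_insert (Finset.notMem_empty y),
    Finset.powerset_empty, Finset.sum_singleton, Finset.sum_singleton,
    Finset.sum_singleton, Finset.sum_singleton]
  simp

/-- For `Q : ∃x∃y (R(x) ∧ S(y) ∧ T(y))` there is a finite instance with a nonempty
exogenous part on which CE and responsibility are not aligned. -/
theorem stmt9 (C : Type) [DecidableEq C] [Countable C] [Infinite C] :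
    ∃ D Den Dex : Finset (C ⊕ (C ⊕ C)),
      Den ∪ Dex = D ∧ Disjoint Den Dex ∧ Dex ≠ ∅ ∧
      ¬ scoresAligned (ceScore (Q9 C) Den Dex) (respScore (Q9 C) D Den) Den := by
  obtain ⟨b, c, hbc⟩ := exists_pair_ne C
  have hcb : c ≠ b := hbc.symm
  set r : C ⊕ (C ⊕ C) := Sum.inl b with hr
  set sb : C ⊕ (C ⊕ C) := Sum.inr (Sum.inl b) with hsb
  set tb : C ⊕ (C ⊕ C) := Sum.inr (Sum.inr b) with htb
  set sc : C ⊕ (C ⊕ C) := Sum.inr (Sum.inl c) with hsc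
  set tc : C ⊕ (C ⊕ C) := Sum.inr (Sum.inr c) with htc
  set D : Finset (C ⊕ (C ⊕ C)) := {sb, tb, sc, r, tc} with hD
  set Den : Finset (C ⊕ (C ⊕ C)) := {sb, tb, sc} with hDen
  set Dex : Finset (C ⊕ (C ⊕ C)) := {r, tc} with hDex
  have n1 : sb ≠ tb := by simp [hsb, htb]
  have n2 : sb ≠ sc := by simp [hsb, hsc, hbc]
  have n3 : tb ≠ sc := by simp [htb, hsc]
  refine ⟨D, Den, Dex, ?_, ?_, ?_, ?_⟩
  · ext x; simp [hD, hDen, hDex]; tauto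
  · simp [Finset.disjoint_left, hDen, hDex, hr, hsb, htb, hsc, htc, hbc, hcb]
  · simp [hDex]
  intro h
  have key := h sc (by simp [hDen]) sb (by simp [hDen])
  have hcard : Den.card = 3 := by
    rw [hDen, card_insert_of_notMem (by simp [n1, n2]),
        card_insert_of_notMem (by simp [n3]), card_singleton]
  have he1 : Den.erase sc = {sb, tb} := by
    ext x
    simp only [hDen, Finset.mem_erase, Finset.mem_insert, Finset.mem_singleton]
    constructor
    · rintro ⟨hx, h1 | h1 | h1⟩ <;> tauto
    · rintro (h1 | h1) <;> subst h1 <;> exact ⟨by assumption, by tauto⟩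
  have he2 : Den.erase sb = {tb, sc} := by
    ext x
    simp only [hDen, Finset.mem_erase, Finset.mem_insert, Finset.mem_singleton]
    constructor
    · rintro ⟨hx, h1 | h1 | h1⟩ <;> tauto
    · rintro (h1 | h1) <;> subst h1 <;>
        exact ⟨by first | exact n1.symm | exact n2.symm, by tauto⟩
  have ce_sc : ceScore (Q9 C) Den Dex sc = 3 / 4 := by
    rw [ceScore, he1, hcard, sum_powerset_pair _ _ _ n1]
    rw [Q9_eq_one b c (by simp [hDex, hr]) (by simp [hsc]) (by simp [hDex, htc]),
        Q9_eq_zero (W := ∅ ∪ Dex) (by intro y hy; simp [hDex, hr, htc] at hy),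
        Q9_eq_one b c (by simp [hDex, hr]) (by simp [hsc]) (by simp [hDex, htc]),
        Q9_eq_zero (W := {tb} ∪ Dex) (by intro y hy; simp [hDex, hr, htb, htc] at hy),
        Q9_eq_one b c (by simp [hDex, hr]) (by simp [hsc]) (by simp [hDex, htc]),
        Q9_eq_zero (W := {sb} ∪ Dex)
          (by intro y hy; simp [hDex, hr, hsb, htc] at hy; subst hy;
              simp [hDex, hr, hsb, htb, htc, hbc]),
        Q9_eq_one b c (by simp [hDex, hr]) (by simp [hsc]) (by simp [hDex, htc]),
        Q9_eq_one b b (by simp [hDex, hr]) (by simp [hsb]) (by simp [htb])]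
    norm_num
  have ce_sb : ceScore (Q9 C) Den Dex sb = 1 / 4 := by
    rw [ceScore, he2, hcard, sum_powerset_pair _ _ _ n3]
    rw [Q9_eq_zero (W := ∅ ∪ Dex ∪ {sb})
          (by intro y hy; simp [hDex, hr, hsb, htc] at hy; subst hy;
              simp [hDex, hr, hsb, htb, htc, hbc]),
        Q9_eq_zero (W := ∅ ∪ Dex) (by intro y hy; simp [hDex, hr, htc] at hy),
        Q9_eq_one b c (by simp [hDex, hr]) (by simp [hsc]) (by simp [hDex, htc]),
        Q9_eq_one b c (by simp [hDex, hr]) (by simp [hsc]) (by simp [hDex, htc]),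
        Q9_eq_one b b (by simp [hDex, hr]) (by simp [hsb]) (by simp [htb]),
        Q9_eq_zero (W := {tb} ∪ Dex) (by intro y hy; simp [hDex, hr, htb, htc] at hy),
        Q9_eq_one b c (by simp [hDex, hr]) (by simp [hsc]) (by simp [hDex, htc]),
        Q9_eq_one b c (by simp [hDex, hr]) (by simp [hsc]) (by simp [hDex, htc])]
    norm_num
  have q_b1 : Q9 C (D \ {sc}) = 1 :=
    Q9_eq_one b b (by simp [hD, hDex, hr, hsc]) (by simp [hD, hsb, hsc, hbc])
      (by simp [hD, htb, hsc])
  have q_b0 : Q9 C (D \ insert sb {sc}) = 0 := by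
    refine Q9_eq_zero fun y hy => ?_
    simp [hD, hDex, hr, hsb, htb, hsc, htc] at hy
    tauto
  have q_c1 : Q9 C (D \ {sb}) = 1 :=
    Q9_eq_one b c (by simp [hD, hDex, hr, hsb]) (by simp [hD, hsc, hsb, hcb])
      (by simp [hD, hDex, htc, hsb])
  have q_c0 : Q9 C (D \ insert sc {sb}) = 0 := by
    refine Q9_eq_zero fun y hy => ?_
    simp [hD, hDex, hr, hsb, htb, hsc, htc] at hy
    tauto
  have resp_sb : respScore (Q9 C) D Den sb = 1 / 2 := by
    have hex : ∃ Γ ⊆ Den.erase sb, Q9 C (D \ Γ) = 1 ∧ Q9 C (D \ insert sb Γ) = 0 :=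
      ⟨{sc}, by rw [he2]; simp, q_b1, q_b0⟩
    have h1 : (1 : ℕ) ∈ {n : ℕ | ∃ Γ ⊆ Den.erase sb,
        Γ.card = n ∧ Q9 C (D \ Γ) = 1 ∧ Q9 C (D \ insert sb Γ) = 0} :=
      ⟨{sc}, by rw [he2]; simp, card_singleton sc, q_b1, q_b0⟩
    have h0 : (0 : ℕ) ∉ {n : ℕ | ∃ Γ ⊆ Den.erase sb,
        Γ.card = n ∧ Q9 C (D \ Γ) = 1 ∧ Q9 C (D \ insert sb Γ) = 0} := by
      rintro ⟨Γ, hΓ, hc, hq1, hq0⟩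
      rw [Finset.card_eq_zero] at hc
      subst hc
      rw [show insert sb (∅ : Finset (C ⊕ (C ⊕ C))) = {sb} from rfl, q_c1] at hq0
      exact one_ne_zero hq0
    have hinf : sInf {n : ℕ | ∃ Γ ⊆ Den.erase sb,
        Γ.card = n ∧ Q9 C (D \ Γ) = 1 ∧ Q9 C (D \ insert sb Γ) = 0} = 1 := by
      refine le_antisymm (Nat.sInf_le h1) ?_
      rcases Nat.eq_zero_or_pos (sInf {n : ℕ | ∃ Γ ⊆ Den.erase sb,
        Γ.card = n ∧ Q9 C (D \ Γ) = 1 ∧ Q9 C (D \ insert sb Γ) = 0}) with hz | hz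
      · have hm := Nat.sInf_mem (⟨1, h1⟩ : Set.Nonempty _)
        rw [hz] at hm
        exact absurd hm h0
      · exact hz
    rw [respScore, if_pos hex, hinf]
    norm_num
  have resp_sc : respScore (Q9 C) D Den sc = 1 / 2 := by
    have hex : ∃ Γ ⊆ Den.erase sc, Q9 C (D \ Γ) = 1 ∧ Q9 C (D \ insert sc Γ) = 0 :=
      ⟨{sb}, by rw [he1]; simp, q_c1, q_c0⟩
    have h1 : (1 : ℕ) ∈ {n : ℕ | ∃ Γ ⊆ Den.erase sc,
        Γ.card = n ∧ Q9 C (D \ Γ) = 1 ∧ Q9 C (D \ insert sc Γ) = 0} :=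
      ⟨{sb}, by rw [he1]; simp, card_singleton sb, q_c1, q_c0⟩
    have h0 : (0 : ℕ) ∉ {n : ℕ | ∃ Γ ⊆ Den.erase sc,
        Γ.card = n ∧ Q9 C (D \ Γ) = 1 ∧ Q9 C (D \ insert sc Γ) = 0} := by
      rintro ⟨Γ, hΓ, hc, hq1, hq0⟩
      rw [Finset.card_eq_zero] at hc
      subst hc
      rw [show insert sc (∅ : Finset (C ⊕ (C ⊕ C))) = {sc} from rfl, q_b1] at hq0
      exact one_ne_zero hq0
    have hinf : sInf {n : ℕ | ∃ Γ ⊆ Den.erase sc,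
        Γ.card = n ∧ Q9 C (D \ Γ) = 1 ∧ Q9 C (D \ insert sc Γ) = 0} = 1 := by
      refine le_antisymm (Nat.sInf_le h1) ?_
      rcases Nat.eq_zero_or_pos (sInf {n : ℕ | ∃ Γ ⊆ Den.erase sc,
        Γ.card = n ∧ Q9 C (D \ Γ) = 1 ∧ Q9 C (D \ insert sc Γ) = 0}) with hz | hz
      · have hm := Nat.sInf_mem (⟨1, h1⟩ : Set.Nonempty _)
        rw [hz] at hm
        exact absurd hm h0
      · exact hz
    rw [respScore, if_pos hex, hinf]
    norm_num
  rw [ce_sc, ce_sb, resp_sc, resp_sb] at key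
  norm_num at key


end
end

section
/- Fix a countably infinite type C of constants, and let tuples be R-tuples (elements of C), S-tuples (pairs in C × C), or T-tuples (elements of C). Let Q_RST be the Boolean query with Q_RST[W] = 1 iff there exist x, y ∈ C with R(x) ∈ W, S(x,y) ∈ W and T(y) ∈ W (the non-hierarchical Boolean conjunctive query ∃x∃y (R(x) ∧ S(x,y) ∧ T(y))). Then there exists a finite instance D all of whose tuples are endogenous (D^ex = ∅) such that CE and ρ are not aligned for (Q_RST, D). -/
open Finset

attribute [local instance] Classical.propDecidable

noncomputable section

variable {α : Type*} [DecidableEq α]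

/-- The non-hierarchical Boolean conjunctive query `∃x∃y (R(x) ∧ S(x,y) ∧ T(y))`:
R-tuples `Sum.inl`, S-tuples `Sum.inr ∘ Sum.inl`, T-tuples `Sum.inr ∘ Sum.inr`. -/
def Qrst (C : Type) [DecidableEq C] : Finset (C ⊕ ((C × C) ⊕ C)) → ℕ :=
  fun W => if ∃ x y : C, Sum.inl x ∈ W ∧ Sum.inr (Sum.inl (x, y)) ∈ W ∧
      Sum.inr (Sum.inr y) ∈ W then 1 else 0

/-! ### Auxiliary material for `stmt13` -/

section Stmt13Aux

/-- Concrete tuple type over `Bool` constants. -/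
abbrev BTup := Bool ⊕ ((Bool × Bool) ⊕ Bool)

section Decidable13
attribute [-instance] Classical.propDecidable
set_option synthInstance.maxSize 400
set_option maxRecDepth 10000

/-- Computable version of `Qrst Bool`. -/
def Qb : Finset BTup → ℕ := fun W =>
  if ∃ x y : Bool, Sum.inl x ∈ W ∧ Sum.inr (Sum.inl (x, y)) ∈ W ∧
      Sum.inr (Sum.inr y) ∈ W then 1 else 0

/-- The concrete instance `{R(a), R(b), S(a,a), S(a,b), S(b,a), T(a), T(b)}` with
`a = false`, `b = true`. -/
def D13 : Finset BTup :=
  {Sum.inl false, Sum.inl true, Sum.inr (Sum.inl (false, false)),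
   Sum.inr (Sum.inl (false, true)), Sum.inr (Sum.inl (true, false)),
   Sum.inr (Sum.inr false), Sum.inr (Sum.inr true)}

lemma sum13_a1 :
    ∑ S ∈ (D13.erase (Sum.inl false)).powerset, Qb (S ∪ {Sum.inl false}) = 31 := by decide
lemma sum13_a0 : ∑ S ∈ (D13.erase (Sum.inl false)).powerset, Qb S = 8 := by decide
lemma sum13_b1 :
    ∑ S ∈ (D13.erase (Sum.inl true)).powerset, Qb (S ∪ {Sum.inl true}) = 25 := by decide
lemma sum13_b0 : ∑ S ∈ (D13.erase (Sum.inl true)).powerset, Qb S = 14 := by decide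
lemma card_D13 : D13.card = 7 := by decide
lemma Qb_minus_b : Qb (D13 \ {Sum.inl true}) = 1 := by decide
lemma Qb_minus_a : Qb (D13 \ {Sum.inl false}) = 1 := by decide
lemma Qb_minus_ab : Qb (D13 \ {Sum.inl false, Sum.inl true}) = 0 := by decide
lemma Qb_minus_ba : Qb (D13 \ {Sum.inl true, Sum.inl false}) = 0 := by decide
lemma mem13_a : Sum.inl false ∈ D13 := by decide
lemma mem13_b : Sum.inl true ∈ D13 := by decide
lemma subset13_b : ({Sum.inl true} : Finset BTup) ⊆ D13.erase (Sum.inl false) := by decide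
lemma subset13_a : ({Sum.inl false} : Finset BTup) ⊆ D13.erase (Sum.inl true) := by decide

end Decidable13

lemma Qrst_bool_eq (W : Finset BTup) : Qrst Bool W = Qb W := by
  by_cases h : ∃ x y : Bool, Sum.inl x ∈ W ∧ Sum.inr (Sum.inl (x, y)) ∈ W ∧
      Sum.inr (Sum.inr y) ∈ W
  · simp [Qrst, Qb, h]
  · simp [Qrst, Qb, h]

lemma powerset_map' {α β : Type*} [DecidableEq β] (f : α ↪ β) (s : Finset α) :
    (s.map f).powerset = s.powerset.map ⟨Finset.map f, Finset.map_injective f⟩ := by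
  ext t
  simp only [Finset.mem_powerset, Finset.mem_map, Function.Embedding.coeFn_mk,
    Finset.mem_powerset]
  constructor
  · intro h
    rw [Finset.map_eq_image] at h
    obtain ⟨u, hu, hut⟩ := Finset.subset_image_iff.1 h
    exact ⟨u, hu, by rw [Finset.map_eq_image]; exact hut⟩
  · rintro ⟨u, hu, rfl⟩
    exact Finset.map_subset_map.2 hu

lemma map_sdiff13 {α β : Type*} [DecidableEq α] [DecidableEq β] (f : α ↪ β)
    (s t : Finset α) : (s \ t).map f = s.map f \ t.map f := by
  simp only [Finset.map_eq_image]
  exact Finset.image_sdiff s t f.injective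

variable {C : Type} [DecidableEq C]

/-- Transport embedding from `Bool`-tuples to `C`-tuples. -/
def gEmb (f : Bool ↪ C) : BTup ↪ (C ⊕ ((C × C) ⊕ C)) where
  toFun := Sum.map f (Sum.map (Prod.map f f) f)
  inj' := by
    rintro (x | ⟨⟨p1, p2⟩ | x⟩) (y | ⟨⟨q1, q2⟩ | y⟩) h <;>
      simp_all [Sum.map, Prod.map, f.injective.eq_iff]

@[simp] lemma gEmb_inl (f : Bool ↪ C) (x : Bool) : gEmb f (Sum.inl x) = Sum.inl (f x) := rfl
@[simp] lemma gEmb_inrl (f : Bool ↪ C) (p : Bool × Bool) :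
    gEmb f (Sum.inr (Sum.inl p)) = Sum.inr (Sum.inl (f p.1, f p.2)) := rfl
@[simp] lemma gEmb_inrr (f : Bool ↪ C) (y : Bool) :
    gEmb f (Sum.inr (Sum.inr y)) = Sum.inr (Sum.inr (f y)) := rfl

lemma Qrst_map (f : Bool ↪ C) (S : Finset BTup) :
    Qrst C (S.map (gEmb f)) = Qrst Bool S := by
  have hiff : (∃ x y : C, Sum.inl x ∈ S.map (gEmb f) ∧
      Sum.inr (Sum.inl (x, y)) ∈ S.map (gEmb f) ∧
      Sum.inr (Sum.inr y) ∈ S.map (gEmb f)) ↔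
      (∃ x y : Bool, Sum.inl x ∈ S ∧ Sum.inr (Sum.inl (x, y)) ∈ S ∧
      Sum.inr (Sum.inr y) ∈ S) := by
    constructor
    · rintro ⟨x, y, h1, h2, h3⟩
      rw [Finset.mem_map] at h1 h2 h3
      obtain ⟨u1, hu1, he1⟩ := h1
      obtain ⟨u2, hu2, he2⟩ := h2
      obtain ⟨u3, hu3, he3⟩ := h3
      rcases u1 with x1 | ⟨p | x1⟩ <;> simp only [gEmb_inl, gEmb_inrl, gEmb_inrr,
        Sum.inl.injEq, Sum.inr.injEq, reduceCtorEq] at he1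
      rcases u2 with x2 | ⟨⟨x2, y2⟩ | x2⟩ <;> simp only [gEmb_inl, gEmb_inrl, gEmb_inrr,
        Sum.inl.injEq, Sum.inr.injEq, Prod.mk.injEq, reduceCtorEq] at he2
      rcases u3 with y3 | ⟨p | y3⟩ <;> simp only [gEmb_inl, gEmb_inrl, gEmb_inrr,
        Sum.inl.injEq, Sum.inr.injEq, reduceCtorEq] at he3
      have hx : x2 = x1 := f.injective (he2.1.trans he1.symm)
      have hy : y2 = y3 := f.injective (he2.2.trans he3.symm)
      subst hx
      exact ⟨x2, y2, hu1, hu2, hy ▸ hu3⟩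
    · rintro ⟨x, y, h1, h2, h3⟩
      refine ⟨f x, f y, ?_, ?_, ?_⟩
      · exact Finset.mem_map_of_mem (gEmb f) h1
      · exact Finset.mem_map_of_mem (gEmb f) h2
      · exact Finset.mem_map_of_mem (gEmb f) h3
  simp only [Qrst]
  by_cases h : ∃ x y : Bool, Sum.inl x ∈ S ∧ Sum.inr (Sum.inl (x, y)) ∈ S ∧
      Sum.inr (Sum.inr y) ∈ S
  · rw [if_pos (hiff.2 h), if_pos h]
  · rw [if_neg (fun hc => h (hiff.1 hc)), if_neg h]

end Stmt13Aux


/-- For `Q_RST : ∃x∃y (R(x) ∧ S(x,y) ∧ T(y))` there is a finite instance, all of whose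
tuples are endogenous, on which CE and responsibility are not aligned. -/
theorem stmt13 (C : Type) [DecidableEq C] [Countable C] [Infinite C] :
    ∃ D : Finset (C ⊕ ((C × C) ⊕ C)),
      ¬ scoresAligned (ceScore (Qrst C) D ∅) (respScore (Qrst C) D D) D := by
  obtain ⟨a, b, hab⟩ := exists_pair_ne C
  have f : Bool ↪ C := ⟨fun t => cond t b a, by
    intro x y h
    cases x <;> cases y
    · rfl
    · exact absurd h hab
    · exact absurd h hab.symm
    · rfl⟩
  set g := gEmb f with hg
  set D : Finset (C ⊕ ((C × C) ⊕ C)) := D13.map g with hD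
  refine ⟨D, fun hal => ?_⟩
  set τa := g (Sum.inl false) with hτa
  set τb := g (Sum.inl true) with hτb
  -- transport of the causal-effect score
  have hce : ∀ τ0 : BTup, ceScore (Qrst C) D ∅ (g τ0) =
      (((∑ S ∈ (D13.erase τ0).powerset, Qb (S ∪ {τ0}) : ℕ) : ℝ) -
        ((∑ S ∈ (D13.erase τ0).powerset, Qb S : ℕ) : ℝ)) / 64 := by
    intro τ0
    unfold ceScore
    rw [hD, show (D13.map g).erase (g τ0) = (D13.erase τ0).map g from
      (Finset.map_erase g D13 τ0).symm, powerset_map', Finset.sum_map, Finset.card_map,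
      card_D13]
    have hterm : ∀ S ∈ (D13.erase τ0).powerset,
        ((Qrst C ((⟨Finset.map g, Finset.map_injective g⟩ : Finset BTup ↪ _) S ∪ ∅ ∪ {g τ0}) : ℝ) -
          (Qrst C ((⟨Finset.map g, Finset.map_injective g⟩ : Finset BTup ↪ _) S ∪ ∅) : ℝ)) =
        ((Qb (S ∪ {τ0}) : ℝ) - (Qb S : ℝ)) := by
      intro S _
      have h1 : (⟨Finset.map g, Finset.map_injective g⟩ : Finset BTup ↪ _) S ∪ ∅ ∪ {g τ0} =
          (S ∪ {τ0}).map g := by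
        simp only [Function.Embedding.coeFn_mk, Finset.union_empty, Finset.map_union,
          Finset.map_singleton]
      have h2 : (⟨Finset.map g, Finset.map_injective g⟩ : Finset BTup ↪ _) S ∪ ∅ = S.map g := by
        simp only [Function.Embedding.coeFn_mk, Finset.union_empty]
      rw [h1, h2, hg, Qrst_map, Qrst_map, Qrst_bool_eq, Qrst_bool_eq]
    rw [Finset.sum_congr rfl hterm, Finset.sum_sub_distrib, Nat.cast_sum, Nat.cast_sum]
    norm_num
  have hceA : ceScore (Qrst C) D ∅ τa = (23 : ℝ) / 64 := by
    rw [hτa, hce, sum13_a1, sum13_a0]; norm_num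
  have hceB : ceScore (Qrst C) D ∅ τb = (11 : ℝ) / 64 := by
    rw [hτb, hce, sum13_b1, sum13_b0]; norm_num
  -- transport of query values on the relevant subinstances
  have hq : ∀ Γ0 : Finset BTup, Qrst C (D \ Γ0.map g) = Qb (D13 \ Γ0) := by
    intro Γ0
    rw [hD, ← map_sdiff13, hg, Qrst_map, Qrst_bool_eq]
  -- responsibility of τa
  have hrespA : respScore (Qrst C) D D τa = 1 / 2 := by
    have hsub : ({τb} : Finset _) ⊆ D.erase τa := by
      rw [hτa, hτb, hD, show ({g (Sum.inl true)} : Finset _) = ({Sum.inl true} :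
        Finset BTup).map g from (Finset.map_singleton g _).symm,
        show (D13.map g).erase (g (Sum.inl false)) = (D13.erase (Sum.inl false)).map g from
        (Finset.map_erase g D13 _).symm]
      exact Finset.map_subset_map.2 subset13_b
    have hq1 : Qrst C (D \ {τb}) = 1 := by
      rw [hτb, show ({g (Sum.inl true)} : Finset _) = ({Sum.inl true} : Finset BTup).map g from
        (Finset.map_singleton g _).symm, hq]
      exact Qb_minus_b
    have hq2 : Qrst C (D \ insert τa {τb}) = 0 := by
      rw [hτa, hτb, show (insert (g (Sum.inl false)) {g (Sum.inl true)} : Finset _) =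
        ({Sum.inl false, Sum.inl true} : Finset BTup).map g by
          rw [Finset.map_insert, Finset.map_singleton], hq]
      exact Qb_minus_ab
    have hq3 : Qrst C (D \ insert τa (∅ : Finset _)) = 1 := by
      have hins : (insert τa (∅ : Finset _)) = ({Sum.inl false} : Finset BTup).map g := by
        rw [hτa, Finset.map_singleton]
        exact Finset.insert_empty
      rw [hins, hq]
      exact Qb_minus_a
    have hex : ∃ Γ ⊆ D.erase τa, Qrst C (D \ Γ) = 1 ∧ Qrst C (D \ insert τa Γ) = 0 :=
      ⟨{τb}, hsub, hq1, hq2⟩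
    have h1mem : 1 ∈ {n : ℕ | ∃ Γ ⊆ D.erase τa,
        Γ.card = n ∧ Qrst C (D \ Γ) = 1 ∧ Qrst C (D \ insert τa Γ) = 0} :=
      ⟨{τb}, hsub, Finset.card_singleton _, hq1, hq2⟩
    have h0mem : 0 ∉ {n : ℕ | ∃ Γ ⊆ D.erase τa,
        Γ.card = n ∧ Qrst C (D \ Γ) = 1 ∧ Qrst C (D \ insert τa Γ) = 0} := by
      rintro ⟨Γ, -, hc, -, hq2'⟩
      rw [Finset.card_eq_zero] at hc
      subst hc
      rw [hq3] at hq2'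
      exact one_ne_zero hq2'
    have hinf : sInf {n : ℕ | ∃ Γ ⊆ D.erase τa,
        Γ.card = n ∧ Qrst C (D \ Γ) = 1 ∧ Qrst C (D \ insert τa Γ) = 0} = 1 := by
      refine le_antisymm (Nat.sInf_le h1mem) ?_
      rcases Nat.eq_zero_or_pos (sInf {n : ℕ | ∃ Γ ⊆ D.erase τa,
        Γ.card = n ∧ Qrst C (D \ Γ) = 1 ∧ Qrst C (D \ insert τa Γ) = 0}) with h | h
      · rcases Nat.sInf_eq_zero.1 h with h' | h'
        · exact absurd h' h0mem
        · exact absurd (h' ▸ h1mem) (Set.notMem_empty 1)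
      · exact h
    rw [respScore, if_pos hex, hinf]
    norm_num
  -- responsibility of τb
  have hrespB : respScore (Qrst C) D D τb = 1 / 2 := by
    have hsub : ({τa} : Finset _) ⊆ D.erase τb := by
      rw [hτa, hτb, hD, show ({g (Sum.inl false)} : Finset _) = ({Sum.inl false} :
        Finset BTup).map g from (Finset.map_singleton g _).symm,
        show (D13.map g).erase (g (Sum.inl true)) = (D13.erase (Sum.inl true)).map g from
        (Finset.map_erase g D13 _).symm]
      exact Finset.map_subset_map.2 subset13_a
    have hq1 : Qrst C (D \ {τa}) = 1 := by
      rw [hτa, show ({g (Sum.inl false)} : Finset _) = ({Sum.inl false} : Finset BTup).map g from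
        (Finset.map_singleton g _).symm, hq]
      exact Qb_minus_a
    have hq2 : Qrst C (D \ insert τb {τa}) = 0 := by
      rw [hτa, hτb, show (insert (g (Sum.inl true)) {g (Sum.inl false)} : Finset _) =
        ({Sum.inl true, Sum.inl false} : Finset BTup).map g by
          rw [Finset.map_insert, Finset.map_singleton], hq]
      exact Qb_minus_ba
    have hq3 : Qrst C (D \ insert τb (∅ : Finset _)) = 1 := by
      have hins : (insert τb (∅ : Finset _)) = ({Sum.inl true} : Finset BTup).map g := by
        rw [hτb, Finset.map_singleton]
        exact Finset.insert_empty
      rw [hins, hq]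
      exact Qb_minus_b
    have hex : ∃ Γ ⊆ D.erase τb, Qrst C (D \ Γ) = 1 ∧ Qrst C (D \ insert τb Γ) = 0 :=
      ⟨{τa}, hsub, hq1, hq2⟩
    have h1mem : 1 ∈ {n : ℕ | ∃ Γ ⊆ D.erase τb,
        Γ.card = n ∧ Qrst C (D \ Γ) = 1 ∧ Qrst C (D \ insert τb Γ) = 0} :=
      ⟨{τa}, hsub, Finset.card_singleton _, hq1, hq2⟩
    have h0mem : 0 ∉ {n : ℕ | ∃ Γ ⊆ D.erase τb,
        Γ.card = n ∧ Qrst C (D \ Γ) = 1 ∧ Qrst C (D \ insert τb Γ) = 0} := by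
      rintro ⟨Γ, -, hc, -, hq2'⟩
      rw [Finset.card_eq_zero] at hc
      subst hc
      rw [hq3] at hq2'
      exact one_ne_zero hq2'
    have hinf : sInf {n : ℕ | ∃ Γ ⊆ D.erase τb,
        Γ.card = n ∧ Qrst C (D \ Γ) = 1 ∧ Qrst C (D \ insert τb Γ) = 0} = 1 := by
      refine le_antisymm (Nat.sInf_le h1mem) ?_
      rcases Nat.eq_zero_or_pos (sInf {n : ℕ | ∃ Γ ⊆ D.erase τb,
        Γ.card = n ∧ Qrst C (D \ Γ) = 1 ∧ Qrst C (D \ insert τb Γ) = 0}) with h | h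
      · rcases Nat.sInf_eq_zero.1 h with h' | h'
        · exact absurd h' h0mem
        · exact absurd (h' ▸ h1mem) (Set.notMem_empty 1)
      · exact h
    rw [respScore, if_pos hex, hinf]
    norm_num
  -- derive the contradiction
  have hmemA : τa ∈ D := by
    rw [hτa, hD]; exact Finset.mem_map_of_mem g mem13_a
  have hmemB : τb ∈ D := by
    rw [hτb, hD]; exact Finset.mem_map_of_mem g mem13_b
  have := (hal τa hmemA τb hmemB).2 (by rw [hrespA, hrespB])
  rw [hceA, hceB] at this
  norm_num at this


end
end

section
/- Fix n ≥ 2 and a countably infinite type C of constants, let tuples be pairs (i,c) ∈ {1,…,n} × C, and let Q_n be the Boolean query with Q_n[W] = 1 iff for every i ∈ {1,…,n} there exists c with (i,c) ∈ W. Let D be a finite instance all of whose tuples are endogenous such that each relation R_i := {c : (i,c) ∈ D} is nonempty, and write r_i := |R_i|. Then for every tuple τ = (i,c) ∈ D: ρ(D,Q_n,τ) = 1/r_i and CE(D,Q_n,τ) = 2^{1−r_i} · ∏_{j ≠ i} (1 − 2^{−r_j}). -/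
open Finset

attribute [local instance] Classical.propDecidable

noncomputable section

variable {α : Type*} [DecidableEq α]

/-- `r_i`: the number of tuples of the relation `R_i` in `D`. -/
def relCard {n : ℕ} {C : Type} [DecidableEq C] (D : Finset (Fin n × C)) (i : Fin n) : ℕ :=
  (D.filter (fun t => t.1 = i)).card


/-! ### Auxiliary lemmas -/

lemma union_inter_pair {β : Type*} [DecidableEq β] {A B T U : Finset β}
    (h : Disjoint A B) (hT : T ⊆ A) (hU : U ⊆ B) : (T ∪ U) ∩ A = T ∧ (T ∪ U) ∩ B = U := by
  constructor
  · rw [Finset.union_inter_distrib_right, Finset.inter_eq_left.2 hT,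
      Finset.disjoint_iff_inter_eq_empty.1 (h.symm.mono_left hU), Finset.union_empty]
  · rw [Finset.union_inter_distrib_right, Finset.inter_eq_left.2 hU,
      Finset.disjoint_iff_inter_eq_empty.1 (h.mono_left hT), Finset.empty_union]

lemma sum_powerset_union_disjoint {β : Type*} [DecidableEq β] {A B : Finset β}
    (h : Disjoint A B) (g : Finset β → ℝ) :
    ∑ S ∈ (A ∪ B).powerset, g S = ∑ T ∈ A.powerset, ∑ U ∈ B.powerset, g (T ∪ U) := by
  rw [← Finset.sum_product']
  refine Finset.sum_nbij' (fun S => (S ∩ A, S ∩ B)) (fun p => p.1 ∪ p.2) ?_ ?_ ?_ ?_ ?_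
  · intro S hS
    simp only [Finset.mem_product, Finset.mem_powerset]
    exact ⟨Finset.inter_subset_right, Finset.inter_subset_right⟩
  · intro p hp
    simp only [Finset.mem_product, Finset.mem_powerset] at hp ⊢
    exact Finset.union_subset_union hp.1 hp.2
  · intro S hS
    simp only [Finset.mem_powerset] at hS
    show S ∩ A ∪ S ∩ B = S
    rw [← Finset.inter_union_distrib_left, Finset.inter_eq_left.2 hS]
  · intro p hp
    simp only [Finset.mem_product, Finset.mem_powerset] at hp
    obtain ⟨h1, h2⟩ := union_inter_pair h hp.1 hp.2
    show (_ ∩ A, _ ∩ B) = p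
    rw [h1, h2]
  · intro S hS
    simp only [Finset.mem_powerset] at hS
    show g S = g (S ∩ A ∪ S ∩ B)
    rw [← Finset.inter_union_distrib_left, Finset.inter_eq_left.2 hS]

lemma sum_powerset_biUnion {ι β : Type*} [DecidableEq ι] [DecidableEq β]
    (s : Finset ι) (E : ι → Finset β) (f : ι → Finset β → ℝ)
    (hd : ∀ j ∈ s, ∀ k ∈ s, j ≠ k → Disjoint (E j) (E k)) :
    ∑ S ∈ (s.biUnion E).powerset, ∏ j ∈ s, f j (S ∩ E j)
      = ∏ j ∈ s, ∑ T ∈ (E j).powerset, f j T := by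
  induction s using Finset.induction_on with
  | empty => simp
  | @insert a s ha ih =>
    have hdisj : Disjoint (E a) (s.biUnion E) := by
      rw [Finset.disjoint_biUnion_right]
      intro k hk
      exact hd a (Finset.mem_insert_self a s) k (Finset.mem_insert_of_mem hk)
        (fun h => ha (h ▸ hk))
    rw [Finset.biUnion_insert, sum_powerset_union_disjoint hdisj,
      Finset.prod_insert ha, ← ih (fun j hj k hk hjk =>
        hd j (Finset.mem_insert_of_mem hj) k (Finset.mem_insert_of_mem hk) hjk),
      Finset.sum_mul_sum]
    refine Finset.sum_congr rfl fun T hT => Finset.sum_congr rfl fun U hU => ?_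
    simp only [Finset.mem_powerset] at hT hU
    rw [Finset.prod_insert ha, (union_inter_pair hdisj hT hU).1]
    congr 1
    refine Finset.prod_congr rfl fun j hj => ?_
    have hdj : Disjoint (E a) (E j) := hd a (Finset.mem_insert_self a s) j
      (Finset.mem_insert_of_mem hj) (fun h => ha (h ▸ hj))
    rw [Finset.union_inter_distrib_right,
      Finset.disjoint_iff_inter_eq_empty.1 (hdj.mono_left hT), Finset.empty_union]

/-- Indicator used to factor the causal-effect sum fiberwise. -/
def fInd {n : ℕ} {C : Type} (i j : Fin n) (T : Finset (Fin n × C)) : ℝ :=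
  if (T = ∅ ↔ j = i) then 1 else 0

lemma sum_ind_empty {β : Type*} [DecidableEq β] (P : Finset β) :
    ∑ T ∈ P.powerset, (if T = ∅ then (1:ℝ) else 0) = 1 := by
  rw [Finset.sum_eq_single_of_mem ∅ (Finset.empty_mem_powerset P)]
  · simp
  · intro T _ hT; rw [if_neg hT]

lemma sumf_eq {n : ℕ} {C : Type} [DecidableEq C] (i : Fin n) (P : Finset (Fin n × C)) :
    ∑ T ∈ P.powerset, fInd i i T = 1 := by
  rw [← sum_ind_empty P]
  refine Finset.sum_congr rfl fun T _ => ?_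
  simp [fInd]

lemma sumf_ne {n : ℕ} {C : Type} [DecidableEq C] {i j : Fin n} (hj : j ≠ i)
    (P : Finset (Fin n × C)) :
    ∑ T ∈ P.powerset, fInd i j T = 2 ^ P.card - 1 := by
  have h : ∀ T : Finset (Fin n × C), fInd i j T = 1 - (if T = ∅ then (1:ℝ) else 0) := by
    intro T
    by_cases hT : T = ∅ <;> simp [fInd, hT, hj]
  rw [Finset.sum_congr rfl (fun T _ => h T), Finset.sum_sub_distrib, sum_ind_empty,
    Finset.sum_const, Finset.card_powerset, nsmul_eq_mul, mul_one]
  push_cast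
  ring

/-- A minimum-cardinality contingency set for `(i,c)`. -/
lemma resp_mem (n : ℕ) (C : Type) [DecidableEq C]
    (D : Finset (Fin n × C)) (hne : ∀ i : Fin n, 0 < relCard D i)
    (i : Fin n) (c : C) (hτ : (i, c) ∈ D) :
    ∃ Γ ⊆ D.erase (i, c), Γ.card = relCard D i - 1 ∧
      Qn n C (D \ Γ) = 1 ∧ Qn n C (D \ insert (i, c) Γ) = 0 := by
  set τ : Fin n × C := (i, c) with hτdef
  have hτfil : τ ∈ D.filter (fun t => t.1 = i) := Finset.mem_filter.2 ⟨hτ, rfl⟩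
  refine ⟨(D.filter (fun t => t.1 = i)).erase τ, ?_, ?_, ?_, ?_⟩
  · intro t ht
    rw [Finset.mem_erase] at ht ⊢
    exact ⟨ht.1, (Finset.mem_filter.1 ht.2).1⟩
  · rw [Finset.card_erase_of_mem hτfil]; rfl
  · rw [Qn, if_pos]
    intro j
    by_cases hj : j = i
    · subst hj
      exact ⟨c, Finset.mem_sdiff.2 ⟨hτ, fun h => (Finset.mem_erase.1 h).1 rfl⟩⟩
    · obtain ⟨t, ht⟩ := Finset.card_pos.1 (hne j)
      rw [Finset.mem_filter] at ht
      refine ⟨t.2, Finset.mem_sdiff.2 ⟨?_, ?_⟩⟩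
      · rw [show (j, t.2) = t from Prod.ext ht.2.symm rfl]; exact ht.1
      · intro h
        have := (Finset.mem_filter.1 (Finset.mem_erase.1 h).2).2
        simp only at this
        exact hj this
  · rw [Qn, if_neg]
    intro hall
    obtain ⟨c', hc'⟩ := hall i
    rw [Finset.mem_sdiff] at hc'
    apply hc'.2
    by_cases h : (i, c') = τ
    · rw [h]; exact Finset.mem_insert_self _ _
    · exact Finset.mem_insert_of_mem (Finset.mem_erase.2
        ⟨h, Finset.mem_filter.2 ⟨hc'.1, rfl⟩⟩)

/-- The minimum size of a contingency set for `(i,c)` is `r_i − 1`. -/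
lemma resp_sInf (n : ℕ) (C : Type) [DecidableEq C]
    (D : Finset (Fin n × C)) (hne : ∀ i : Fin n, 0 < relCard D i)
    (i : Fin n) (c : C) (hτ : (i, c) ∈ D) :
    sInf {m : ℕ | ∃ Γ ⊆ D.erase (i, c),
        Γ.card = m ∧ Qn n C (D \ Γ) = 1 ∧ Qn n C (D \ insert (i, c) Γ) = 0}
      = relCard D i - 1 := by
  set τ : Fin n × C := (i, c) with hτdef
  have hτfil : τ ∈ D.filter (fun t => t.1 = i) := Finset.mem_filter.2 ⟨hτ, rfl⟩
  have hmem : relCard D i - 1 ∈ {m : ℕ | ∃ Γ ⊆ D.erase τ,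
      Γ.card = m ∧ Qn n C (D \ Γ) = 1 ∧ Qn n C (D \ insert τ Γ) = 0} :=
    resp_mem n C D hne i c hτ
  refine le_antisymm (Nat.sInf_le hmem) (le_csInf ⟨_, hmem⟩ ?_)
  rintro m ⟨Γ, hΓsub, hΓcard, hQ1, hQ0⟩
  rw [Qn] at hQ0 hQ1
  have h1 : ∀ j : Fin n, ∃ c' : C, (j, c') ∈ D \ Γ := by
    by_contra h; rw [if_neg h] at hQ1; exact one_ne_zero hQ1.symm
  have h0 : ¬ ∀ j : Fin n, ∃ c' : C, (j, c') ∈ D \ insert τ Γ := by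
    intro h; rw [if_pos h] at hQ0; exact one_ne_zero hQ0
  push_neg at h0
  obtain ⟨j, hj⟩ := h0
  have hji : j = i := by
    by_contra hji
    obtain ⟨c', hc'⟩ := h1 j
    rw [Finset.mem_sdiff] at hc'
    refine hj c' (Finset.mem_sdiff.2 ⟨hc'.1, fun h => ?_⟩)
    rcases Finset.mem_insert.1 h with h | h
    · exact hji (congrArg Prod.fst h)
    · exact hc'.2 h
  subst hji
  have hsub : (D.filter (fun t => t.1 = j)).erase τ ⊆ Γ := by
    intro t ht
    rw [Finset.mem_erase, Finset.mem_filter] at ht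
    have htj : t = (j, t.2) := Prod.ext ht.2.2 rfl
    have : t ∉ D \ insert τ Γ := by rw [htj] at ht ⊢; exact fun h => hj t.2 h
    rw [Finset.mem_sdiff] at this
    push_neg at this
    rcases Finset.mem_insert.1 (this ht.2.1) with h | h
    · exact absurd h ht.1
    · exact h
  calc relCard D j - 1 = ((D.filter (fun t => t.1 = j)).erase τ).card := by
        rw [Finset.card_erase_of_mem hτfil]; rfl
    _ ≤ Γ.card := Finset.card_le_card hsub
    _ = m := hΓcard

/-- The causal-effect computation for `Q_n`. -/
lemma ce_core (n : ℕ) (C : Type) [DecidableEq C]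
    (D : Finset (Fin n × C)) (hne : ∀ i : Fin n, 0 < relCard D i)
    (i : Fin n) (c : C) (hτ : (i, c) ∈ D) :
    (∑ S ∈ (D.erase (i,c)).powerset,
        ((Qn n C (S ∪ ∅ ∪ {(i,c)}) : ℝ) - (Qn n C (S ∪ ∅) : ℝ))) / 2 ^ (D.card - 1) =
      (2 : ℝ) ^ ((1 : ℤ) - (relCard D i : ℤ)) *
        ∏ j ∈ Finset.univ.erase i, (1 - (2 : ℝ) ^ (-(relCard D j : ℤ))) := by
  set τ : Fin n × C := (i, c) with hτdef
  set E : Fin n → Finset (Fin n × C) := fun j => (D.erase τ).filter (fun t => t.1 = j)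
    with hE
  have hτfil : τ ∈ D.filter (fun t => t.1 = i) := Finset.mem_filter.2 ⟨hτ, rfl⟩
  have hdisj : ∀ j ∈ (univ : Finset (Fin n)), ∀ k ∈ (univ : Finset (Fin n)),
      j ≠ k → Disjoint (E j) (E k) := by
    intro j _ k _ hjk
    rw [Finset.disjoint_left]
    intro t htj htk
    simp only [hE, Finset.mem_filter] at htj htk
    exact hjk (htj.2.symm.trans htk.2)
  have hbiUnion : (univ : Finset (Fin n)).biUnion E = D.erase τ := by
    ext t
    simp only [Finset.mem_biUnion, Finset.mem_univ, true_and, hE, Finset.mem_filter]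
    exact ⟨fun ⟨j, h⟩ => h.1, fun h => ⟨t.1, h, rfl⟩⟩
  have hEne : ∀ j : Fin n, j ≠ i → (E j).card = relCard D j := by
    intro j hj
    simp only [hE]
    rw [Finset.filter_erase, Finset.erase_eq_of_notMem]
    · rfl
    · intro h
      exact hj ((Finset.mem_filter.1 h).2.symm.trans rfl)
  have hterm : ∀ S ∈ (D.erase τ).powerset,
      ((Qn n C (S ∪ ∅ ∪ {τ}) : ℝ) - (Qn n C (S ∪ ∅) : ℝ))
        = ∏ j : Fin n, fInd i j (S ∩ E j) := by
    intro S hS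
    rw [Finset.mem_powerset] at hS
    simp only [Finset.union_empty]
    have hfib : ∀ j : Fin n, S ∩ E j = S.filter (fun t => t.1 = j) := by
      intro j
      simp only [hE]
      rw [Finset.inter_filter, Finset.inter_eq_left.2 hS]
    have hempty : ∀ j : Fin n, (S ∩ E j = ∅) ↔ ¬ ∃ c' : C, (j, c') ∈ S := by
      intro j
      rw [hfib j, Finset.filter_eq_empty_iff]
      constructor
      · rintro h ⟨c', hc'⟩; exact h hc' rfl
      · intro h t ht htj
        exact h ⟨t.2, by rwa [show (j, t.2) = t from Prod.ext htj.symm rfl]⟩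
    have hQτ : (∀ j : Fin n, ∃ c' : C, (j, c') ∈ S ∪ {τ}) ↔
        (∀ j : Fin n, j ≠ i → ∃ c' : C, (j, c') ∈ S) := by
      constructor
      · intro h j hj
        obtain ⟨c', hc'⟩ := h j
        rcases Finset.mem_union.1 hc' with h' | h'
        · exact ⟨c', h'⟩
        · exact absurd (congrArg Prod.fst (Finset.mem_singleton.1 h')) hj
      · intro h j
        by_cases hj : j = i
        · subst hj
          exact ⟨c, Finset.mem_union_right _ (Finset.mem_singleton_self τ)⟩
        · obtain ⟨c', hc'⟩ := h j hj
          exact ⟨c', Finset.mem_union_left _ hc'⟩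
    by_cases hPi : ∃ c' : C, (i, c') ∈ S
    · have hzero : fInd i i (S ∩ E i) = 0 := by
        rw [fInd, if_neg]
        simp [hempty i, hPi]
      rw [Finset.prod_eq_zero (Finset.mem_univ i) hzero]
      simp only [Qn]
      by_cases hall : ∀ j : Fin n, j ≠ i → ∃ c' : C, (j, c') ∈ S
      · rw [if_pos (hQτ.2 hall), if_pos (fun j => by
          by_cases hj : j = i
          · exact hj ▸ hPi
          · exact hall j hj)]
        norm_num
      · rw [if_neg (fun h => hall (hQτ.1 h)), if_neg (fun h => hall (fun j _ => h j))]
        norm_num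
    · by_cases hall : ∀ j : Fin n, j ≠ i → ∃ c' : C, (j, c') ∈ S
      · rw [Qn, Qn, if_pos (hQτ.2 hall), if_neg (fun h => hPi (h i)),
          Finset.prod_eq_one (fun j _ => ?_)]
        · norm_num
        · rw [fInd, if_pos]
          by_cases hj : j = i
          · simp [hj, hempty i, hPi]
          · simp [hj, hempty j, hall j hj]
      · push_neg at hall
        obtain ⟨j, hji, hPj⟩ := hall
        have hPj' : ¬ ∃ c' : C, (j, c') ∈ S := by push_neg; exact hPj
        have hzero : fInd i j (S ∩ E j) = 0 := by
          rw [fInd, if_neg]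
          simp [hempty j, hPj', hji]
        rw [Finset.prod_eq_zero (Finset.mem_univ j) hzero, Qn, Qn,
          if_neg (fun h => hPj' (hQτ.1 h j hji)), if_neg (fun h => hPj' (h j))]
        norm_num
  rw [Finset.sum_congr rfl hterm, ← hbiUnion,
    sum_powerset_biUnion _ E (fInd i) hdisj,
    ← Finset.mul_prod_erase univ _ (Finset.mem_univ i), sumf_eq,
    Finset.prod_congr rfl (fun j hj => sumf_ne (Finset.mem_erase.1 hj).1 (E j)),
    Finset.prod_congr rfl (fun j hj => by rw [hEne j (Finset.mem_erase.1 hj).1]),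
    one_mul]
  have hri : 1 ≤ relCard D i := hne i
  have hD : D.card = ∑ j : Fin n, relCard D j :=
    Finset.card_eq_sum_card_fiberwise (fun x _ => Finset.mem_univ x.1)
  have hsplit : D.card - 1 = (relCard D i - 1) + ∑ j ∈ univ.erase i, relCard D j := by
    have := Finset.add_sum_erase univ (relCard D) (Finset.mem_univ i)
    omega
  have h2 : ∀ j : Fin n, (2:ℝ) ^ (relCard D j) ≠ 0 := fun j => by positivity
  have hpow : (2:ℝ) ^ (D.card - 1)
      = 2 ^ (relCard D i - 1) * ∏ j ∈ univ.erase i, (2:ℝ) ^ (relCard D j) := by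
    rw [hsplit, pow_add, Finset.prod_pow_eq_pow_sum]
  have hz1 : (2:ℝ) ^ ((1 : ℤ) - (relCard D i : ℤ)) = ((2:ℝ) ^ (relCard D i - 1))⁻¹ := by
    have : (1 : ℤ) - (relCard D i : ℤ) = -((relCard D i - 1 : ℕ) : ℤ) := by
      push_cast [hri]; ring
    rw [this, zpow_neg, zpow_natCast]
  have hz2 : ∀ j : Fin n, (1 : ℝ) - (2:ℝ) ^ (-(relCard D j : ℤ))
      = ((2:ℝ) ^ (relCard D j) - 1) * ((2:ℝ) ^ (relCard D j))⁻¹ := by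
    intro j
    rw [zpow_neg, zpow_natCast, sub_mul, one_mul, mul_inv_cancel₀ (h2 j)]
  rw [hpow, hz1, Finset.prod_congr rfl (fun j _ => hz2 j), Finset.prod_mul_distrib,
    Finset.prod_inv_distrib, div_eq_mul_inv, mul_inv]
  ring

/-- For `Q_n` (`n ≥ 2`) and a purely endogenous instance `D` with every relation `R_i`
nonempty: for each tuple `τ = (i,c) ∈ D`, `ρ(D,Q_n,τ) = 1/r_i` and
`CE(D,Q_n,τ) = 2^{1−r_i} · ∏_{j ≠ i} (1 − 2^{−r_j})`. -/
theorem stmt15 (n : ℕ) (hn : 2 ≤ n) (C : Type) [DecidableEq C] [Countable C] [Infinite C]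
    (D : Finset (Fin n × C)) (hne : ∀ i : Fin n, 0 < relCard D i) :
    ∀ τ ∈ D,
      respScore (Qn n C) D D τ = 1 / (relCard D τ.1 : ℝ) ∧
      ceScore (Qn n C) D ∅ τ =
        (2 : ℝ) ^ ((1 : ℤ) - (relCard D τ.1 : ℤ)) *
          ∏ j ∈ Finset.univ.erase τ.1, (1 - (2 : ℝ) ^ (-(relCard D j : ℤ))) := by
  rintro ⟨i, c⟩ hτ
  constructor
  · obtain ⟨Γ, hs, hc, h1, h0⟩ := resp_mem n C D hne i c hτ
    rw [respScore, if_pos ⟨Γ, hs, h1, h0⟩, resp_sInf n C D hne i c hτ]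
    have hri : 1 ≤ relCard D i := hne i
    rw [Nat.cast_sub hri, Nat.cast_one]
    norm_num
  · rw [ceScore]
    exact ce_core n C D hne i c hτ

end
end

section
/- Fix a countably infinite type C of constants, let tuples be either R-tuples or S-tuples, each a pair in C × C, and let Q_RS be the Boolean query with Q_RS[W] = 1 iff there exists x such that R(x,y) ∈ W for some y and S(x,z) ∈ W for some z. Let D be a finite instance all of whose tuples are endogenous in which every tuple has the same first coordinate c, with r ≥ 1 R-tuples and s ≥ 1 S-tuples. Then for every R-tuple τ_R ∈ D and every S-tuple τ_S ∈ D: ρ(D,Q_RS,τ_R) = 1/r, ρ(D,Q_RS,τ_S) = 1/s, CE(D,Q_RS,τ_R) = (2^s − 1)/2^{r+s−1}, and CE(D,Q_RS,τ_S) = (2^r − 1)/2^{r+s−1}; equivalently, CE(D,Q_RS,τ_R) = P_D(Q_RS) · 2/(2^r − 1) and CE(D,Q_RS,τ_S) = P_D(Q_RS) · 2/(2^s − 1), where P_D(Q_RS) = (2^r − 1)(2^s − 1)/2^{r+s}. -/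
/-
On sub-instances of `D` all tuples share the join value `c`, so `Q_RS` holds exactly when an
R-tuple and an S-tuple are both present: it is the query "meets `A` and meets `B`" for the
disjoint sets `A` of R-tuples and `B` of S-tuples. For that query the satisfying subsets of
`A ∪ B` correspond to pairs (nonempty subset of `A`, nonempty subset of `B`); a tuple `τ ∈ A`
is pivotal for `S ⊆ (A ∪ B) \ {τ}` exactly when `S` misses `A` and meets `B`; and a
contingency set for `τ` must delete all of `A` except `τ` while leaving some tuple of `B`.
-/

open Finset

attribute [local instance] Classical.propDecidable

noncomputable section

variable {α : Type*} [DecidableEq α]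

variable (C : Type) [DecidableEq C]

/-- The Boolean conjunctive query `∃x∃y∃z (R(x,y) ∧ S(x,z))`: R-tuples left,
S-tuples right. -/
def Qrs : Finset ((C × C) ⊕ (C × C)) → ℕ :=
  fun W => if ∃ x : C, (∃ y : C, Sum.inl (x, y) ∈ W) ∧ (∃ z : C, Sum.inr (x, z) ∈ W)
    then 1 else 0

/-- The first coordinate of a tuple. -/
def fstC : (C × C) ⊕ (C × C) → C
  | Sum.inl p => p.1
  | Sum.inr p => p.1

lemma card_powerset_union_filter_inter {A B : Finset α} (hd : Disjoint A B)
    (p q : Finset α → Prop) [DecidablePred p] [DecidablePred q] :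
    #{S ∈ (A ∪ B).powerset | p (S ∩ A) ∧ q (S ∩ B)} =
      #{X ∈ A.powerset | p X} * #{Y ∈ B.powerset | q Y} := by
  rw [← card_product]
  have hparts : ∀ X ⊆ A, ∀ Y ⊆ B, (X ∪ Y) ∩ A = X ∧ (X ∪ Y) ∩ B = Y := by
    intro X hX Y hY
    rw [union_inter_distrib_right, union_inter_distrib_right, inter_eq_left.2 hX,
      inter_eq_left.2 hY, disjoint_iff_inter_eq_empty.1 (hd.mono_left hX),
      disjoint_iff_inter_eq_empty.1 (hd.symm.mono_left hY), union_empty, empty_union]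
    exact ⟨rfl, rfl⟩
  refine card_nbij' (fun S => (S ∩ A, S ∩ B)) (fun XY => XY.1 ∪ XY.2) ?_ ?_ ?_ ?_
  · intro S hS
    simp_all
  · rintro ⟨X, Y⟩ hXY
    simp only [coe_product, coe_filter, Set.mem_prod, Set.mem_ofPred_eq, mem_powerset] at hXY ⊢
    rw [(hparts X hXY.1.1 Y hXY.2.1).1, (hparts X hXY.1.1 Y hXY.2.1).2]
    exact ⟨union_subset_union hXY.1.1 hXY.2.1, hXY.1.2, hXY.2.2⟩
  · intro S hS
    simp only [coe_filter, Set.mem_ofPred_eq, mem_powerset] at hS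
    simp [← inter_union_distrib_left, inter_eq_left.2 hS.1]
  · rintro ⟨X, Y⟩ hXY
    simp only [coe_product, coe_filter, Set.mem_prod, Set.mem_ofPred_eq, mem_powerset] at hXY
    simp [hparts X hXY.1.1 Y hXY.2.1]

lemma card_powerset_filter_nonempty (T : Finset α) :
    #{S ∈ T.powerset | S.Nonempty} = 2 ^ #T - 1 := by
  have : {S ∈ T.powerset | S.Nonempty} = T.powerset.erase ∅ := by
    ext S; simp [nonempty_iff_ne_empty, and_comm]
  rw [this, card_erase_of_mem (empty_mem_powerset T), card_powerset]

def IsContingencySet (Q : Finset α → ℕ) (D Den : Finset α) (τ : α) (Γ : Finset α) : Prop :=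
  Γ ⊆ Den.erase τ ∧ Q (D \ Γ) = 1 ∧ Q (D \ insert τ Γ) = 0

lemma respScore_eq_of_isContingencySet_of_card_le {Q : Finset α → ℕ} {D Den Γ₀ : Finset α}
    {τ : α} (h₀ : IsContingencySet Q D Den τ Γ₀)
    (hmin : ∀ Γ, IsContingencySet Q D Den τ Γ → #Γ₀ ≤ #Γ) :
    respScore Q D Den τ = 1 / (1 + #Γ₀) := by
  have hmem : #Γ₀ ∈ {n : ℕ | ∃ Γ ⊆ Den.erase τ,
      #Γ = n ∧ Q (D \ Γ) = 1 ∧ Q (D \ insert τ Γ) = 0} := ⟨Γ₀, h₀.1, rfl, h₀.2⟩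
  rw [respScore, if_pos ⟨Γ₀, h₀⟩, le_antisymm (Nat.sInf_le hmem)
    (le_csInf ⟨_, hmem⟩ fun n ⟨Γ, hΓ, hn, h⟩ => hn ▸ hmin Γ ⟨hΓ, h⟩)]

def meetsBoth (A B W : Finset α) : ℕ :=
  if (W ∩ A).Nonempty ∧ (W ∩ B).Nonempty then 1 else 0

lemma meetsBoth_eq_one_iff {A B W : Finset α} :
    meetsBoth A B W = 1 ↔ (W ∩ A).Nonempty ∧ (W ∩ B).Nonempty := by
  unfold meetsBoth; split_ifs with h <;> simp [h]

lemma meetsBoth_comm (A B : Finset α) : meetsBoth A B = meetsBoth B A := by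
  ext W; simp only [meetsBoth, and_comm]

lemma meetsBoth_insert_sub_meetsBoth {A B S : Finset α} {τ : α} (hτA : τ ∈ A) (hτB : τ ∉ B)
    (hτS : τ ∉ S) :
    (meetsBoth A B (insert τ S) : ℝ) - meetsBoth A B S =
      if S ∩ A.erase τ = ∅ ∧ (S ∩ B).Nonempty then 1 else 0 := by
  have hA : (insert τ S ∩ A).Nonempty := ⟨τ, by simp [hτA]⟩
  have herase : S ∩ A.erase τ = S ∩ A := by
    rw [inter_erase, erase_eq_of_notMem (fun h => hτS (mem_inter.1 h).1)]
  simp only [herase, ← not_nonempty_iff_eq_empty]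
  by_cases hSA : (S ∩ A).Nonempty <;> by_cases hSB : (S ∩ B).Nonempty <;>
    simp [meetsBoth, hA, hSA, hSB, insert_inter_of_notMem hτB]

section AgreesWithMeetsBoth

variable {Q : Finset α → ℕ} {A B : Finset α}

lemma probQ_eq_of_eq_meetsBoth (hd : Disjoint A B)
    (hQ : ∀ W ⊆ A ∪ B, Q W = meetsBoth A B W) :
    probQ Q (A ∪ B) ∅ = ((2 : ℝ) ^ #A - 1) * (2 ^ #B - 1) / 2 ^ (#A + #B) := by
  have hfilter : {S ∈ (A ∪ B).powerset | Q (S ∪ ∅) = 1} =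
      {S ∈ (A ∪ B).powerset | (S ∩ A).Nonempty ∧ (S ∩ B).Nonempty} := by
    refine filter_congr fun S hS => ?_
    rw [union_empty, hQ S (mem_powerset.1 hS), meetsBoth_eq_one_iff]
  rw [probQ, hfilter, card_powerset_union_filter_inter hd, card_powerset_filter_nonempty,
    card_powerset_filter_nonempty, card_union_of_disjoint hd]
  push_cast [Nat.one_le_two_pow]
  ring

lemma ceScore_eq_of_eq_meetsBoth (hd : Disjoint A B)
    (hQ : ∀ W ⊆ A ∪ B, Q W = meetsBoth A B W) {τ : α} (hτ : τ ∈ A) :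
    ceScore Q (A ∪ B) ∅ τ = ((2 : ℝ) ^ #B - 1) / 2 ^ (#A + #B - 1) := by
  have hτB : τ ∉ B := disjoint_left.1 hd hτ
  have herase : (A ∪ B).erase τ = A.erase τ ∪ B := by
    rw [erase_union_distrib, erase_eq_of_notMem hτB]
  have hterm : ∀ S ∈ ((A ∪ B).erase τ).powerset,
      ((Q (S ∪ ∅ ∪ {τ}) : ℝ) - Q (S ∪ ∅)) =
        if S ∩ A.erase τ = ∅ ∧ (S ∩ B).Nonempty then 1 else 0 := by
    intro S hS
    have hS' : S ⊆ (A ∪ B).erase τ := mem_powerset.1 hS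
    have hτS : τ ∉ S := fun h => notMem_erase τ _ (hS' h)
    rw [union_empty, union_singleton, hQ S (hS'.trans (erase_subset _ _)),
      hQ _ (insert_subset (mem_union_left _ hτ) (hS'.trans (erase_subset _ _))),
      meetsBoth_insert_sub_meetsBoth hτ hτB hτS]
  rw [ceScore, sum_congr rfl hterm, sum_boole, herase,
    card_powerset_union_filter_inter (hd.mono_left (erase_subset _ _)) (· = ∅),
    card_powerset_filter_nonempty, card_union_of_disjoint hd]
  simp [filter_eq', Nat.one_le_two_pow]

lemma respScore_eq_of_eq_meetsBoth (hd : Disjoint A B)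
    (hQ : ∀ W ⊆ A ∪ B, Q W = meetsBoth A B W) (hB : B.Nonempty) {τ : α} (hτ : τ ∈ A) :
    respScore Q (A ∪ B) (A ∪ B) τ = 1 / #A := by
  have hτB : τ ∉ B := disjoint_left.1 hd hτ
  have hremove : IsContingencySet Q (A ∪ B) (A ∪ B) τ (A.erase τ) := by
    refine ⟨erase_subset_erase _ subset_union_left, ?_, ?_⟩
    · obtain ⟨b, hb⟩ := hB
      rw [hQ _ sdiff_subset, meetsBoth_eq_one_iff]
      exact ⟨⟨τ, by simp [hτ]⟩, ⟨b, by simp [hb, disjoint_right.1 hd hb]⟩⟩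
    · rw [insert_erase hτ, hQ _ sdiff_subset, meetsBoth]
      simp
  have hmin : ∀ Γ, IsContingencySet Q (A ∪ B) (A ∪ B) τ Γ → #(A.erase τ) ≤ #Γ := by
    rintro Γ ⟨-, h1, h0⟩
    rw [hQ _ sdiff_subset, meetsBoth_eq_one_iff] at h1
    obtain ⟨b, hb⟩ := h1.2
    have hB' : ((A ∪ B) \ insert τ Γ ∩ B).Nonempty :=
      ⟨b, by simp_all [ne_of_mem_of_not_mem (mem_inter.1 hb).2 hτB]⟩
    have hA' : ¬((A ∪ B) \ insert τ Γ ∩ A).Nonempty := fun hA' => by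
      rw [hQ _ sdiff_subset, meetsBoth, if_pos ⟨hA', hB'⟩] at h0
      exact one_ne_zero h0
    refine card_le_card fun a ha => ?_
    obtain ⟨haτ, haA⟩ := mem_erase.1 ha
    by_contra haΓ
    exact hA' ⟨a, by simp [haτ, haA, haΓ]⟩
  rw [respScore_eq_of_isContingencySet_of_card_le hremove hmin, ← card_erase_add_one hτ]
  push_cast
  ring

lemma scores_of_eq_meetsBoth (hd : Disjoint A B)
    (hQ : ∀ W ⊆ A ∪ B, Q W = meetsBoth A B W) (hB : B.Nonempty) {τ : α} (hτ : τ ∈ A) :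
    respScore Q (A ∪ B) (A ∪ B) τ = 1 / #A ∧
      ceScore Q (A ∪ B) ∅ τ = ((2 : ℝ) ^ #B - 1) / 2 ^ (#A + #B - 1) ∧
      ceScore Q (A ∪ B) ∅ τ = probQ Q (A ∪ B) ∅ * 2 / ((2 : ℝ) ^ #A - 1) := by
  have hA : 1 ≤ #A := card_pos.2 ⟨τ, hτ⟩
  have hA' : (2 : ℝ) ^ #A - 1 ≠ 0 := sub_ne_zero.2 (one_lt_pow₀ one_lt_two (by omega)).ne'
  have hpow : (2 : ℝ) ^ (#A + #B) = 2 ^ (#A + #B - 1) * 2 := by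
    rw [← pow_succ]; congr 1; omega
  refine ⟨respScore_eq_of_eq_meetsBoth hd hQ hB hτ, ceScore_eq_of_eq_meetsBoth hd hQ hτ, ?_⟩
  rw [ceScore_eq_of_eq_meetsBoth hd hQ hτ, probQ_eq_of_eq_meetsBoth hd hQ, hpow]
  field_simp

end AgreesWithMeetsBoth

lemma filter_inl_union_filter_inr (D : Finset ((C × C) ⊕ (C × C))) :
    D.filter (fun t => ∃ p, t = Sum.inl p) ∪ D.filter (fun t => ∃ p, t = Sum.inr p) = D := by
  ext (⟨x, y⟩ | ⟨x, y⟩) <;> simp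

lemma Qrs_eq_meetsBoth {D W : Finset ((C × C) ⊕ (C × C))} {c : C} (hc : ∀ t ∈ D, fstC C t = c)
    (hW : W ⊆ D) :
    Qrs C W = meetsBoth (D.filter (fun t => ∃ p, t = Sum.inl p))
      (D.filter (fun t => ∃ p, t = Sum.inr p)) W := by
  refine if_congr ⟨?_, ?_⟩ rfl rfl
  · rintro ⟨x, ⟨y, hy⟩, ⟨z, hz⟩⟩
    exact ⟨⟨_, mem_inter.2 ⟨hy, mem_filter.2 ⟨hW hy, _, rfl⟩⟩⟩,
      ⟨_, mem_inter.2 ⟨hz, mem_filter.2 ⟨hW hz, _, rfl⟩⟩⟩⟩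
  · rintro ⟨⟨_, ht⟩, ⟨_, ht'⟩⟩
    simp only [mem_inter, mem_filter] at ht ht'
    obtain ⟨hxW, hxD, ⟨x, y⟩, rfl⟩ := ht
    obtain ⟨hzW, hzD, ⟨x', z⟩, rfl⟩ := ht'
    have hx : x = c := hc _ hxD
    have hx' : x' = c := hc _ hzD
    exact ⟨c, ⟨y, hx ▸ hxW⟩, ⟨z, hx' ▸ hzW⟩⟩

theorem stmt16 (D : Finset ((C × C) ⊕ (C × C))) (c : C)
    (hc : ∀ t ∈ D, fstC C t = c) (r s : ℕ)
    (hr : r = (D.filter (fun t => ∃ p, t = Sum.inl p)).card)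
    (hs : s = (D.filter (fun t => ∃ p, t = Sum.inr p)).card)
    (hr1 : 1 ≤ r) (hs1 : 1 ≤ s) :
    (∀ p : C × C, Sum.inl p ∈ D →
        respScore (Qrs C) D D (Sum.inl p) = 1 / (r : ℝ) ∧
        ceScore (Qrs C) D ∅ (Sum.inl p) = ((2 : ℝ) ^ s - 1) / 2 ^ (r + s - 1) ∧
        ceScore (Qrs C) D ∅ (Sum.inl p) = probQ (Qrs C) D ∅ * 2 / ((2 : ℝ) ^ r - 1)) ∧
    (∀ p : C × C, Sum.inr p ∈ D →
        respScore (Qrs C) D D (Sum.inr p) = 1 / (s : ℝ) ∧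
        ceScore (Qrs C) D ∅ (Sum.inr p) = ((2 : ℝ) ^ r - 1) / 2 ^ (r + s - 1) ∧
        ceScore (Qrs C) D ∅ (Sum.inr p) = probQ (Qrs C) D ∅ * 2 / ((2 : ℝ) ^ s - 1)) ∧
    probQ (Qrs C) D ∅ = ((2 : ℝ) ^ r - 1) * ((2 : ℝ) ^ s - 1) / 2 ^ (r + s) := by
  subst hr hs
  set R := D.filter (fun t => ∃ p, t = Sum.inl p)
  set S := D.filter (fun t => ∃ p, t = Sum.inr p)
  have hD : R ∪ S = D := filter_inl_union_filter_inr C D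
  have hd : Disjoint R S := disjoint_filter.2 (by simp)
  have hQ : ∀ W ⊆ R ∪ S, Qrs C W = meetsBoth R S W := fun W hW =>
    Qrs_eq_meetsBoth C hc (hD ▸ hW)
  have hQ' : ∀ W ⊆ S ∪ R, Qrs C W = meetsBoth S R W := by
    rw [union_comm, meetsBoth_comm]; exact hQ
  refine ⟨fun p hp => ?_, fun p hp => ?_, ?_⟩
  · simpa only [hD] using
      scores_of_eq_meetsBoth hd hQ (card_pos.1 hs1) (mem_filter.2 ⟨hp, p, rfl⟩)
  · simpa only [union_comm S, hD, add_comm #S] using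
      scores_of_eq_meetsBoth hd.symm hQ' (card_pos.1 hr1) (mem_filter.2 ⟨hp, p, rfl⟩)
  · simpa only [hD] using probQ_eq_of_eq_meetsBoth hd hQ

end
end
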